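/- arXiv:1107.1700 — 3 statements merged into one kernel-verified Lean document; each statement's English description precedes it below -/
import Mathlib

section
/- For every prime p, every k ∈ {1,…,p−1}, every integer j ≥ 0, every a ∈ I_p, and every ξ ∈ ℚ_p, the p-adic Fourier transform of the restriction to ℤ_p of the Kozyrev wavelet satisfies 𝓕_p[1_{ℤ_p} · ψ^{(0)}_{k;ja}](ξ) = p^{−j/2} · 1_{ℤ_p}(p^j a) · χ_p(p^j a ξ) · 1_{ℤ_p}(p^{−1}k + p^j ξ), where 1_{ℤ_p}(p^j a) is 1 if p^j a ∈ ℤ_p and 0 otherwise. -/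
open MeasureTheory Complex
open scoped Classical

noncomputable section

variable (p : ℕ) [Fact p.Prime]

instance : MeasurableSpace ℚ_[p] := borel _
instance : BorelSpace ℚ_[p] := ⟨rfl⟩

instance (q : Nat.Primes) : Fact (q : ℕ).Prime := ⟨q.2⟩

/-- The indicator function of `ℤ_p` inside `ℚ_p`. -/
def indZ (x : ℚ_[p]) : ℂ := if ‖x‖ ≤ 1 then 1 else 0

/-- The fractional part of a `p`-adic number: the unique rational `r ∈ ℤ[1/p] ∩ [0,1)`
with `x - r ∈ ℤ_p`. -/
def padicFract (x : ℚ_[p]) : ℚ :=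
  if h : ∃ r : ℚ, (0 ≤ r ∧ r < 1 ∧ ∃ (m : ℤ) (n : ℕ), r = m / p ^ n) ∧ ‖x - (r : ℚ_[p])‖ ≤ 1
  then h.choose else 0

/-- The standard additive character `χ_p` of `ℚ_p`. -/
def padicChar (x : ℚ_[p]) : ℂ := Complex.exp (2 * Real.pi * Complex.I * (padicFract p x : ℂ))

/-- The Kozyrev wavelet `ψ⁰_{k;ja}`. -/
def kozyrev (k : ℕ) (j : ℤ) (a : ℚ_[p]) (x : ℚ_[p]) : ℂ :=
  ((p : ℝ) ^ ((j : ℝ) / 2) : ℝ) *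
    padicChar p ((k : ℚ_[p]) / (p : ℚ_[p]) * ((p : ℚ_[p]) ^ (-j) * x - a)) *
    indZ p ((p : ℚ_[p]) ^ (-j) * x - a)

/-- The set `I_p = ℤ[1/p] ∩ [0,1)` of shifts, viewed inside `ℚ_p`. -/
def Ip : Set ℚ_[p] := {a | ∃ (m n : ℕ), m < p ^ n ∧ a = (m : ℚ_[p]) / (p : ℚ_[p]) ^ n}


/-- The `p`-adic Fourier transform `𝓕_pφ(ξ) = ∫ χ_p(ξx) φ(x) dμ(x)`. -/
def padicFourier (μ : MeasureTheory.Measure ℚ_[p]) (φ : ℚ_[p] → ℂ) (ξ : ℚ_[p]) : ℂ :=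
  ∫ x, padicChar p (ξ * x) * φ x ∂μ

/-- The inverse `p`-adic Fourier transform `𝓕_p⁻¹ψ(x) = ∫ χ_p(-xξ) ψ(ξ) dμ(ξ)`. -/
def padicFourierInv (μ : MeasureTheory.Measure ℚ_[p]) (ψ : ℚ_[p] → ℂ) (x : ℚ_[p]) : ℂ :=
  ∫ ξ, padicChar p (-(x * ξ)) * ψ ξ ∂μ

namespace Aux
variable {p : ℕ} [Fact p.Prime]

abbrev good (x : ℚ_[p]) (r : ℚ) : Prop :=
  (0 ≤ r ∧ r < 1 ∧ ∃ (m : ℤ) (n : ℕ), r = m / p ^ n) ∧ ‖x - (r : ℚ_[p])‖ ≤ 1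

lemma hp0 : (p : ℚ) ≠ 0 := Nat.cast_ne_zero.mpr (Fact.out : p.Prime).ne_zero

lemma nonarch_sub (a b : ℚ_[p]) : ‖a - b‖ ≤ max ‖a‖ ‖b‖ := by
  rw [sub_eq_add_neg]
  simpa using Padic.nonarchimedean a (-b)

/-- uniqueness of the fractional part -/
lemma good_unique {x : ℚ_[p]} {r s : ℚ} (hr : good x r) (hs : good x s) : r = s := by
  obtain ⟨⟨hr0, hr1, m, n, hrm⟩, hrx⟩ := hr
  obtain ⟨⟨hs0, hs1, m', n', hsm⟩, hsx⟩ := hs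
  -- ‖(r - s : ℚ)‖_p ≤ 1
  have hnorm : ‖((r - s : ℚ) : ℚ_[p])‖ ≤ 1 := by
    have : ((r - s : ℚ) : ℚ_[p]) = (x - (s:ℚ_[p])) - (x - (r:ℚ_[p])) := by push_cast; ring
    rw [this]
    exact le_trans (nonarch_sub (x - (s:ℚ_[p])) (x - (r:ℚ_[p]))) (max_le hsx hrx)
  set c : ℤ := m * p ^ n' - m' * p ^ n with hc
  have hcq : (c : ℚ) = (r - s) * p ^ (n + n') := by
    have hpn : ((p:ℚ)) ^ n ≠ 0 := pow_ne_zero _ hp0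
    have hpn' : ((p:ℚ)) ^ n' ≠ 0 := pow_ne_zero _ hp0
    rw [hc, hrm, hsm]
    push_cast
    field_simp
    ring
  have hcq' : (c : ℚ_[p]) = ((r - s : ℚ) : ℚ_[p]) * (p : ℚ_[p]) ^ (n + n') := by
    exact_mod_cast congrArg (fun q : ℚ => (q : ℚ_[p])) hcq
  have hdvd : ((p : ℤ) ^ (n + n')) ∣ c := by
    have hn : ‖(c : ℚ_[p])‖ ≤ (p:ℝ) ^ (-(n+n':ℕ) : ℤ) := by
      rw [hcq', norm_mul, Padic.norm_p_pow]
      calc ‖((r - s : ℚ) : ℚ_[p])‖ * (p:ℝ) ^ (-(n+n':ℕ) : ℤ)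
          ≤ 1 * (p:ℝ) ^ (-(n+n':ℕ) : ℤ) := by
            apply mul_le_mul_of_nonneg_right hnorm (by positivity)
        _ = (p:ℝ) ^ (-(n+n':ℕ) : ℤ) := one_mul _
    exact_mod_cast (Padic.norm_int_le_pow_iff_dvd c (n+n')).mp hn
  obtain ⟨e, he⟩ := hdvd
  have he' : r - s = (e : ℚ) := by
    have hpow : ((p:ℚ) ^ (n+n')) ≠ 0 := pow_ne_zero _ hp0
    have : (r - s) * p ^ (n+n') = (e:ℚ) * p ^ (n+n') := by
      rw [← hcq, he]; push_cast; ring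
    exact mul_right_cancel₀ hpow this
  have h1 : (e : ℚ) < 1 := by rw [← he']; linarith
  have h2 : (-1 : ℚ) < e := by rw [← he']; linarith
  have h1' : e < 1 := by exact_mod_cast h1
  have h2' : (-1:ℤ) < e := by exact_mod_cast h2
  have : e = 0 := by omega
  rw [this] at he'; simpa using sub_eq_zero.mp (by simpa using he')

lemma good_exists (x : ℚ_[p]) : ∃ r : ℚ, good x r := by
  have hp1 : (1:ℝ) < (p:ℝ) := by exact_mod_cast (Fact.out : p.Prime).one_lt
  have hpR : (p:ℝ) ≠ 0 := by positivity
  obtain ⟨n, hn⟩ : ∃ n : ℕ, ‖(p:ℚ_[p])^n * x‖ ≤ 1 := by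
    rcases eq_or_ne x 0 with rfl | hx
    · exact ⟨0, by simp⟩
    · refine ⟨(-x.valuation).toNat, ?_⟩
      rw [norm_mul, Padic.norm_p_pow, Padic.norm_eq_zpow_neg_valuation hx,
        ← zpow_add₀ hpR]
      have h1 : -((-x.valuation).toNat : ℤ) + -x.valuation ≤ 0 := by
        have := Int.self_le_toNat (-x.valuation); omega
      calc (p:ℝ) ^ (-((-x.valuation).toNat : ℤ) + -x.valuation) ≤ (p:ℝ) ^ (0:ℤ) :=
            zpow_le_zpow_right₀ (le_of_lt hp1) h1
        _ = 1 := zpow_zero _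
  set z : ℤ_[p] := ⟨(p:ℚ_[p])^n * x, hn⟩ with hz
  set m : ℕ := z.appr n with hm
  have hmlt : m < p ^ n := z.appr_lt n
  have hspec : ‖z - (m : ℤ_[p])‖ ≤ (p:ℝ) ^ (-(n:ℤ)) :=
    (PadicInt.norm_le_pow_iff_mem_span_pow _ n).mpr (z.appr_spec n)
  have hspec' : ‖(p:ℚ_[p])^n * x - (m : ℚ_[p])‖ ≤ (p:ℝ) ^ (-(n:ℤ)) := by
    have : ((z - (m:ℤ_[p]) : ℤ_[p]) : ℚ_[p]) = (p:ℚ_[p])^n * x - (m : ℚ_[p]) := by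
      rw [PadicInt.coe_sub, PadicInt.coe_natCast]
    rw [← this]; rw [← PadicInt.norm_def]; exact hspec
  refine ⟨(m : ℚ) / (p:ℚ) ^ n, ⟨by positivity, ?_, (m:ℤ), n, by push_cast; ring⟩, ?_⟩
  · rw [div_lt_one (pow_pos (by exact_mod_cast (Fact.out : p.Prime).pos) n)]
    exact_mod_cast hmlt
  · have hcast : (((m : ℚ) / (p:ℚ) ^ n : ℚ) : ℚ_[p]) = (m : ℚ_[p]) / (p:ℚ_[p]) ^ n := by
      push_cast; ring
    rw [hcast]
    have hpQp : ((p:ℚ_[p]))^n ≠ 0 := pow_ne_zero _ (Nat.cast_ne_zero.mpr (Fact.out : p.Prime).ne_zero)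
    have : x - (m : ℚ_[p]) / (p:ℚ_[p]) ^ n = ((p:ℚ_[p])^n * x - (m : ℚ_[p])) / (p:ℚ_[p])^n := by
      field_simp
    rw [this, norm_div, Padic.norm_p_pow]
    calc ‖(p:ℚ_[p])^n * x - (m:ℚ_[p])‖ / (p:ℝ) ^ (-(n:ℤ))
        ≤ (p:ℝ) ^ (-(n:ℤ)) / (p:ℝ) ^ (-(n:ℤ)) := by
          apply div_le_div_of_nonneg_right hspec' (by positivity) |>.trans_eq rfl
      _ = 1 := div_self (by positivity)

lemma padicFract_spec (x : ℚ_[p]) : good x (padicFract p x) := by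
  rw [padicFract, dif_pos (good_exists x)]
  exact (good_exists x).choose_spec

lemma padicFract_eq {x : ℚ_[p]} {r : ℚ} (h : good x r) : padicFract p x = r :=
  good_unique (padicFract_spec x) h

lemma padicFract_of_norm_le_one {x : ℚ_[p]} (h : ‖x‖ ≤ 1) : padicFract p x = 0 :=
  padicFract_eq ⟨⟨le_refl 0, one_pos, 0, 0, by norm_num⟩, by simpa using h⟩

lemma padicChar_of_norm_le_one {x : ℚ_[p]} (h : ‖x‖ ≤ 1) : padicChar p x = 1 := by
  rw [padicChar, padicFract_of_norm_le_one h]; simp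

lemma padicChar_add (x y : ℚ_[p]) :
    padicChar p (x + y) = padicChar p x * padicChar p y := by
  obtain ⟨⟨hr0, hr1, m, n, hrm⟩, hrx⟩ := padicFract_spec x
  obtain ⟨⟨hs0, hs1, m', n', hsm⟩, hsy⟩ := padicFract_spec y
  set r := padicFract p x
  set s := padicFract p y
  have hpnQ : ((p:ℚ)) ^ n ≠ 0 := pow_ne_zero _ hp0
  have hpn'Q : ((p:ℚ)) ^ n' ≠ 0 := pow_ne_zero _ hp0
  have ht : padicFract p (x + y) = r + s - ⌊r + s⌋ := by
    apply padicFract_eq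
    refine ⟨⟨?_, ?_, m * p ^ n' + m' * p ^ n - ⌊r + s⌋ * p ^ (n + n'), n + n', ?_⟩, ?_⟩
    · have := Int.fract_nonneg (r + s); rwa [Int.fract] at this
    · have := Int.fract_lt_one (r + s); rwa [Int.fract] at this
    · set B : ℤ := ⌊r + s⌋ with hB
      rw [hrm, hsm]
      push_cast
      field_simp [(hp0 : (p:ℚ) ≠ 0)]
      ring
    · have hcast : (((r + s - ⌊r + s⌋ : ℚ)) : ℚ_[p])
          = (r : ℚ_[p]) + (s : ℚ_[p]) - ((⌊r + s⌋ : ℤ) : ℚ_[p]) := by push_cast; ring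
      have : x + y - ((r + s - ⌊r + s⌋ : ℚ) : ℚ_[p])
          = (x - (r:ℚ_[p])) + ((y - (s:ℚ_[p])) + ((⌊r + s⌋ : ℤ) : ℚ_[p])) := by
        rw [hcast]; ring
      rw [this]
      refine le_trans (Padic.nonarchimedean (x - (r:ℚ_[p]))
        ((y - (s:ℚ_[p])) + ((⌊r + s⌋ : ℤ) : ℚ_[p]))) (max_le hrx ?_)
      refine le_trans (Padic.nonarchimedean (y - (s:ℚ_[p])) ((⌊r + s⌋ : ℤ) : ℚ_[p]))
        (max_le hsy ?_)
      exact Padic.norm_int_le_one _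
  rw [padicChar, padicChar, padicChar, ht]
  rw [← Complex.exp_add]
  have harg : 2 * Real.pi * Complex.I * ((r + s - ⌊r + s⌋ : ℚ) : ℂ)
      = (2 * Real.pi * Complex.I * (r:ℂ) + 2 * Real.pi * Complex.I * (s:ℂ))
        + (-⌊r + s⌋ : ℤ) * (2 * Real.pi * Complex.I) := by push_cast; ring
  rw [harg, Complex.exp_add, Complex.exp_int_mul_two_pi_mul_I, mul_one]

lemma norm_padicChar (x : ℚ_[p]) : ‖padicChar p x‖ = 1 := by
  rw [padicChar]
  have : 2 * Real.pi * Complex.I * ((padicFract p x : ℚ) : ℂ)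
      = ((2 * Real.pi * (padicFract p x : ℚ) : ℝ) : ℂ) * Complex.I := by push_cast; ring
  rw [this, Complex.norm_exp_ofReal_mul_I]

lemma padicChar_ne_one {x : ℚ_[p]} (h : 1 < ‖x‖) : padicChar p x ≠ 1 := by
  obtain ⟨⟨hr0, hr1, _⟩, hrx⟩ := padicFract_spec x
  set r := padicFract p x
  have hrne : r ≠ 0 := by
    intro h0
    rw [h0] at hrx
    simp only [Rat.cast_zero, sub_zero] at hrx
    exact absurd hrx (not_le.mpr h)
  rw [padicChar]
  intro hexp
  obtain ⟨k, hk⟩ := Complex.exp_eq_one_iff.mp hexp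
  have h2pi : (2 * Real.pi * Complex.I : ℂ) ≠ 0 := by
    simp [Real.pi_ne_zero, Complex.I_ne_zero]
  have hrk : ((r:ℚ) : ℂ) = (k : ℂ) := by
    have : 2 * Real.pi * Complex.I * (r : ℂ) = 2 * Real.pi * Complex.I * (k : ℂ) := by
      rw [hk]; ring
    exact mul_left_cancel₀ h2pi this
  have hrkQ : (r : ℚ) = (k : ℚ) := by exact_mod_cast hrk
  have hk0 : 0 ≤ (k:ℚ) := hrkQ ▸ hr0
  have hk1 : (k:ℚ) < 1 := hrkQ ▸ hr1
  have hk0' : (0:ℤ) ≤ k := by exact_mod_cast hk0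
  have hk1' : k < 1 := by exact_mod_cast hk1
  have hk00 : k = 0 := by omega
  rw [hk00] at hrkQ
  exact hrne (by simpa using hrkQ)

lemma continuous_padicChar : Continuous (padicChar p : ℚ_[p] → ℂ) := by
  refine continuous_iff_continuousAt.mpr fun x₀ => ?_
  have hev : ∀ᶠ y in nhds x₀, padicChar p y = padicChar p x₀ := by
    filter_upwards [Metric.ball_mem_nhds x₀ one_pos] with y hy
    have hnorm : ‖y - x₀‖ ≤ 1 := le_of_lt (by simpa [dist_eq_norm] using hy)
    have : padicChar p y = padicChar p (x₀ + (y - x₀)) := by ring_nf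
    rw [this, padicChar_add, padicChar_of_norm_le_one hnorm, mul_one]
  exact (continuousAt_congr hev).mpr continuousAt_const

lemma measurable_padicChar : Measurable (padicChar p : ℚ_[p] → ℂ) :=
  continuous_padicChar.measurable

def pball (p : ℕ) [Fact p.Prime] (n : ℤ) : Set ℚ_[p] := {x : ℚ_[p] | ‖x‖ ≤ (p:ℝ) ^ n}

lemma measurableSet_norm_sub_le (b : ℚ_[p]) (r : ℝ) :
    MeasurableSet {x : ℚ_[p] | ‖x - b‖ ≤ r} :=
  (isClosed_le (by fun_prop) continuous_const).measurableSet

lemma exists_digit {n : ℕ} {x : ℚ_[p]} (h : ‖x‖ ≤ (p:ℝ) ^ (-(n:ℤ))) :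
    ∃ t : ℕ, t < p ∧ ‖x - (t:ℚ_[p]) * (p:ℚ_[p]) ^ n‖ ≤ (p:ℝ) ^ (-((n:ℤ)+1)) := by
  have hpR : (0:ℝ) < (p:ℝ) := by exact_mod_cast (Fact.out : p.Prime).pos
  have hz : ‖x * ((p:ℚ_[p]) ^ n)⁻¹‖ ≤ 1 := by
    rw [norm_mul, norm_inv, Padic.norm_p_pow]
    calc ‖x‖ * ((p:ℝ) ^ (-(n:ℤ)))⁻¹ ≤ (p:ℝ) ^ (-(n:ℤ)) * ((p:ℝ) ^ (-(n:ℤ)))⁻¹ := by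
          apply mul_le_mul_of_nonneg_right h (by positivity)
      _ = 1 := mul_inv_cancel₀ (by positivity)
  set w : ℤ_[p] := ⟨x * ((p:ℚ_[p]) ^ n)⁻¹, hz⟩ with hw
  refine ⟨w.appr 1, by simpa using w.appr_lt 1, ?_⟩
  have hspec : ‖w - ((w.appr 1 : ℕ) : ℤ_[p])‖ ≤ (p:ℝ) ^ (-(1:ℕ):ℤ) :=
    (PadicInt.norm_le_pow_iff_mem_span_pow _ 1).mpr (w.appr_spec 1)
  have hcoe : ((w - ((w.appr 1 : ℕ) : ℤ_[p]) : ℤ_[p]) : ℚ_[p])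
      = x * ((p:ℚ_[p]) ^ n)⁻¹ - ((w.appr 1 : ℕ) : ℚ_[p]) := by rw [PadicInt.coe_sub, PadicInt.coe_natCast]
  have hQ : ‖x * ((p:ℚ_[p]) ^ n)⁻¹ - ((w.appr 1 : ℕ) : ℚ_[p])‖ ≤ (p:ℝ)⁻¹ := by
    rw [← hcoe, ← PadicInt.norm_def]
    simpa using hspec
  have hpQp : ((p:ℚ_[p])) ^ n ≠ 0 :=
    pow_ne_zero _ (Nat.cast_ne_zero.mpr (Fact.out : p.Prime).ne_zero)
  have hfactor : x - ((w.appr 1 : ℕ) : ℚ_[p]) * (p:ℚ_[p]) ^ n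
      = (x * ((p:ℚ_[p]) ^ n)⁻¹ - ((w.appr 1 : ℕ) : ℚ_[p])) * (p:ℚ_[p]) ^ n := by
    field_simp
  rw [hfactor, norm_mul, Padic.norm_p_pow]
  calc ‖x * ((p:ℚ_[p]) ^ n)⁻¹ - ((w.appr 1 : ℕ) : ℚ_[p])‖ * (p:ℝ) ^ (-(n:ℤ))
      ≤ (p:ℝ)⁻¹ * (p:ℝ) ^ (-(n:ℤ)) := mul_le_mul_of_nonneg_right hQ (by positivity)
    _ = (p:ℝ) ^ (-((n:ℤ)+1)) := by
        rw [← zpow_neg_one, ← zpow_add₀ (ne_of_gt hpR)]; ring_nf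

lemma digit_unique {n : ℕ} {x : ℚ_[p]} {t t' : ℕ} (ht : t < p) (ht' : t' < p)
    (h : ‖x - (t:ℚ_[p]) * (p:ℚ_[p]) ^ n‖ ≤ (p:ℝ) ^ (-((n:ℤ)+1)))
    (h' : ‖x - (t':ℚ_[p]) * (p:ℚ_[p]) ^ n‖ ≤ (p:ℝ) ^ (-((n:ℤ)+1))) : t = t' := by
  have hd : ‖(((t:ℤ) - (t':ℤ) : ℤ) : ℚ_[p]) * (p:ℚ_[p]) ^ n‖ ≤ (p:ℝ) ^ (-((n:ℤ)+1)) := by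
    have : (((t:ℤ) - (t':ℤ) : ℤ) : ℚ_[p]) * (p:ℚ_[p]) ^ n
        = (x - (t':ℚ_[p]) * (p:ℚ_[p]) ^ n) - (x - (t:ℚ_[p]) * (p:ℚ_[p]) ^ n) := by
      push_cast; ring
    rw [this]
    exact le_trans (nonarch_sub _ _) (max_le h' h)
  have hpR : (0:ℝ) < (p:ℝ) := by exact_mod_cast (Fact.out : p.Prime).pos
  have hd' : ‖(((t:ℤ) - (t':ℤ) : ℤ) : ℚ_[p])‖ ≤ (p:ℝ) ^ (-(1:ℕ) : ℤ) := by
    rw [norm_mul, Padic.norm_p_pow] at hd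
    have := mul_le_mul_of_nonneg_right hd (le_of_lt (zpow_pos hpR ((n:ℤ))) : (0:ℝ) ≤ (p:ℝ)^(n:ℤ))
    rw [mul_assoc, ← zpow_add₀ (ne_of_gt hpR), ← zpow_add₀ (ne_of_gt hpR)] at this
    simpa using this
  have hdvd : ((p:ℤ) ^ 1) ∣ ((t:ℤ) - (t':ℤ)) := (Padic.norm_int_le_pow_iff_dvd _ 1).mp hd'
  rw [pow_one] at hdvd
  have h0 : (t:ℤ) - (t':ℤ) = 0 := Int.eq_zero_of_abs_lt_dvd hdvd (abs_lt.mpr ⟨by omega, by omega⟩)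
  omega

lemma mem_pball_of_digit {n : ℕ} {x : ℚ_[p]} {t : ℕ} (ht : t < p)
    (h : ‖x - (t:ℚ_[p]) * (p:ℚ_[p]) ^ n‖ ≤ (p:ℝ) ^ (-((n:ℤ)+1))) :
    ‖x‖ ≤ (p:ℝ) ^ (-(n:ℤ)) := by
  have hpR : (1:ℝ) < (p:ℝ) := by exact_mod_cast (Fact.out : p.Prime).one_lt
  have h1 : ‖(t:ℚ_[p]) * (p:ℚ_[p]) ^ n‖ ≤ (p:ℝ) ^ (-(n:ℤ)) := by
    rw [norm_mul, Padic.norm_p_pow]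
    calc ‖(t:ℚ_[p])‖ * (p:ℝ) ^ (-(n:ℤ)) ≤ 1 * (p:ℝ) ^ (-(n:ℤ)) := by
          apply mul_le_mul_of_nonneg_right _ (by positivity)
          exact_mod_cast Padic.norm_int_le_one (t : ℤ)
      _ = (p:ℝ) ^ (-(n:ℤ)) := one_mul _
  have h2 : ‖x - (t:ℚ_[p]) * (p:ℚ_[p]) ^ n‖ ≤ (p:ℝ) ^ (-(n:ℤ)) :=
    le_trans h (zpow_le_zpow_right₀ (le_of_lt hpR) (by omega))
  have : x = (x - (t:ℚ_[p]) * (p:ℚ_[p]) ^ n) + (t:ℚ_[p]) * (p:ℚ_[p]) ^ n := by ring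
  rw [this]
  exact le_trans (Padic.nonarchimedean _ _) (max_le h2 h1)

section Haar
variable (μ : Measure ℚ_[p]) [μ.IsAddHaarMeasure]

lemma measure_translate (b : ℚ_[p]) (r : ℝ) :
    μ {x : ℚ_[p] | ‖x - b‖ ≤ r} = μ {x : ℚ_[p] | ‖x‖ ≤ r} := by
  have : {x : ℚ_[p] | ‖x - b‖ ≤ r} = (fun x => (-b) + x) ⁻¹' {x : ℚ_[p] | ‖x‖ ≤ r} := by
    ext x
    show ‖x - b‖ ≤ r ↔ ‖-b + x‖ ≤ r
    rw [neg_add_eq_sub]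
  rw [this, measure_preimage_add]

lemma measure_pball_succ (hμ : μ {x : ℚ_[p] | ‖x‖ ≤ 1} = 1) (n : ℕ) :
    μ {x : ℚ_[p] | ‖x‖ ≤ (p:ℝ) ^ (-(n:ℤ))}
      = (p : ENNReal) * μ {x : ℚ_[p] | ‖x‖ ≤ (p:ℝ) ^ (-((n:ℤ)+1))} := by
  have hcover : {x : ℚ_[p] | ‖x‖ ≤ (p:ℝ) ^ (-(n:ℤ))}
      = ⋃ t ∈ Finset.range p, {x : ℚ_[p] | ‖x - (t:ℚ_[p]) * (p:ℚ_[p]) ^ n‖ ≤ (p:ℝ) ^ (-((n:ℤ)+1))} := by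
    ext x
    simp only [Set.mem_setOf_eq, Set.mem_iUnion, Finset.mem_range]
    constructor
    · intro h
      obtain ⟨t, ht, hle⟩ := exists_digit h
      exact ⟨t, ht, hle⟩
    · rintro ⟨t, ht, hle⟩
      exact mem_pball_of_digit ht hle
  have hdisj : (Finset.range p : Set ℕ).PairwiseDisjoint
      (fun t : ℕ => {x : ℚ_[p] | ‖x - (t:ℚ_[p]) * (p:ℚ_[p]) ^ n‖ ≤ (p:ℝ) ^ (-((n:ℤ)+1))}) := by
    intro t ht t' ht' htt'
    simp only [Finset.coe_range, Set.mem_Iio] at ht ht'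
    apply Set.disjoint_left.mpr
    intro x hx hx'
    exact htt' (digit_unique ht ht' hx hx')
  rw [hcover, measure_biUnion_finset hdisj (fun t _ => measurableSet_norm_sub_le _ _)]
  have : ∀ t ∈ Finset.range p,
      μ {x : ℚ_[p] | ‖x - (t:ℚ_[p]) * (p:ℚ_[p]) ^ n‖ ≤ (p:ℝ) ^ (-((n:ℤ)+1))}
        = μ {x : ℚ_[p] | ‖x‖ ≤ (p:ℝ) ^ (-((n:ℤ)+1))} := fun t _ => measure_translate μ _ _
  rw [Finset.sum_congr rfl this, Finset.sum_const, Finset.card_range, nsmul_eq_mul]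

lemma measure_pball (hμ : μ {x : ℚ_[p] | ‖x‖ ≤ 1} = 1) (n : ℕ) :
    μ {x : ℚ_[p] | ‖x‖ ≤ (p:ℝ) ^ (-(n:ℤ))} = ((p : ENNReal) ^ n)⁻¹ := by
  have hp0 : (p : ENNReal) ≠ 0 := by exact_mod_cast (Fact.out : p.Prime).ne_zero
  have hptop : (p : ENNReal) ≠ ⊤ := ENNReal.natCast_ne_top p
  induction n with
  | zero => simpa using hμ
  | succ n ih =>
    have hstep := measure_pball_succ μ hμ n
    rw [ih] at hstep
    have hE : (-((n+1:ℕ):ℤ)) = -((n:ℤ)+1) := by push_cast; ring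
    rw [hE]
    calc μ {x : ℚ_[p] | ‖x‖ ≤ (p:ℝ) ^ (-((n:ℤ)+1))}
        = (p:ENNReal)⁻¹ * ((p:ENNReal) * μ {x : ℚ_[p] | ‖x‖ ≤ (p:ℝ) ^ (-((n:ℤ)+1))}) := by
          rw [← mul_assoc, ENNReal.inv_mul_cancel hp0 hptop, one_mul]
      _ = (p:ENNReal)⁻¹ * ((p:ENNReal) ^ n)⁻¹ := by rw [← hstep]
      _ = ((p:ENNReal) ^ (n+1))⁻¹ := by
          rw [pow_succ, ENNReal.mul_inv (Or.inl (pow_ne_zero _ hp0)) (Or.inr hp0)]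
          ring

lemma integrable_piece (r : ℝ) (b c : ℚ_[p]) :
    Integrable (fun x => (if ‖x - b‖ ≤ r then (1:ℂ) else 0) * padicChar p (c * x)) μ := by
  have hS : MeasurableSet {x : ℚ_[p] | ‖x - b‖ ≤ r} := measurableSet_norm_sub_le b r
  have heq : (fun x => (if ‖x - b‖ ≤ r then (1:ℂ) else 0) * padicChar p (c * x))
      = Set.indicator {x : ℚ_[p] | ‖x - b‖ ≤ r} (fun x => padicChar p (c * x)) := by
    funext x
    rw [Set.indicator_apply]
    by_cases h : ‖x - b‖ ≤ r
    · simp [h, Set.mem_setOf_eq]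
    · simp [h, Set.mem_setOf_eq]
  rw [heq, integrable_indicator_iff hS]
  apply Measure.integrableOn_of_bounded (M := 1)
  · have hset : {x : ℚ_[p] | ‖x - b‖ ≤ r} = Metric.closedBall b r := by
      ext x; simp [Metric.mem_closedBall, dist_eq_norm]
    rw [hset]
    exact ((isCompact_closedBall b r).measure_lt_top).ne
  · exact ((measurable_padicChar.comp (measurable_const_mul c)).aestronglyMeasurable)
  · exact Filter.Eventually.of_forall fun x => le_of_eq (norm_padicChar _)

lemma measurableSet_norm_le (r : ℝ) : MeasurableSet {x : ℚ_[p] | ‖x‖ ≤ r} :=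
  (isClosed_le (by fun_prop) continuous_const).measurableSet

lemma J_triv (hμ : μ {x : ℚ_[p] | ‖x‖ ≤ 1} = 1) {n : ℕ} {c : ℚ_[p]}
    (h : ‖c‖ ≤ (p:ℝ) ^ (n:ℤ)) :
    ∫ x, (if ‖x‖ ≤ (p:ℝ) ^ (-(n:ℤ)) then (1:ℂ) else 0) * padicChar p (c * x) ∂μ
      = (((p:ℝ) ^ (-(n:ℤ)) : ℝ) : ℂ) := by
  have hpR : (0:ℝ) < (p:ℝ) := by exact_mod_cast (Fact.out : p.Prime).pos
  have hpt : ∀ x : ℚ_[p], (if ‖x‖ ≤ (p:ℝ) ^ (-(n:ℤ)) then (1:ℂ) else 0) * padicChar p (c * x)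
      = Set.indicator {x : ℚ_[p] | ‖x‖ ≤ (p:ℝ) ^ (-(n:ℤ))} (fun _ => (1:ℂ)) x := by
    intro x
    rw [Set.indicator_apply]
    by_cases hx : ‖x‖ ≤ (p:ℝ) ^ (-(n:ℤ))
    · have hc1 : ‖c * x‖ ≤ 1 := by
        rw [norm_mul]
        calc ‖c‖ * ‖x‖ ≤ (p:ℝ) ^ (n:ℤ) * (p:ℝ) ^ (-(n:ℤ)) :=
              mul_le_mul h hx (norm_nonneg x) (by positivity)
          _ = 1 := by rw [← zpow_add₀ (ne_of_gt hpR)]; simp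
      rw [if_pos hx, if_pos (by exact hx : x ∈ {x : ℚ_[p] | ‖x‖ ≤ (p:ℝ) ^ (-(n:ℤ))}),
        padicChar_of_norm_le_one hc1, one_mul]
    · rw [if_neg hx, if_neg (by exact hx : x ∉ {x : ℚ_[p] | ‖x‖ ≤ (p:ℝ) ^ (-(n:ℤ))}), zero_mul]
  rw [integral_congr_ae (Filter.Eventually.of_forall hpt)]
  rw [integral_indicator (measurableSet_norm_le _), setIntegral_const, measureReal_def, measure_pball μ hμ n]
  have : ((((p:ENNReal) ^ n)⁻¹).toReal) = (p:ℝ) ^ (-(n:ℤ)) := by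
    rw [ENNReal.toReal_inv, ENNReal.toReal_pow, zpow_neg, zpow_natCast]
    norm_num
  rw [this]
  simp

lemma J_zero {n : ℕ} {c : ℚ_[p]} (h : ¬ ‖c‖ ≤ (p:ℝ) ^ (n:ℤ)) :
    ∫ x, (if ‖x‖ ≤ (p:ℝ) ^ (-(n:ℤ)) then (1:ℂ) else 0) * padicChar p (c * x) ∂μ = 0 := by
  have hpR : (1:ℝ) < (p:ℝ) := by exact_mod_cast (Fact.out : p.Prime).one_lt
  have hpR0 : (0:ℝ) < (p:ℝ) := lt_trans one_pos hpR
  have hc0 : c ≠ 0 := by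
    intro h0; apply h; rw [h0, norm_zero]; positivity
  set v : ℤ := c.valuation with hv
  have hcnorm : ‖c‖ = (p:ℝ) ^ (-v) := Padic.norm_eq_zpow_neg_valuation hc0
  have hvlt : v ≤ -(n:ℤ) - 1 := by
    by_contra hcon
    push_neg at hcon
    apply h
    rw [hcnorm]
    exact zpow_le_zpow_right₀ (le_of_lt hpR) (by omega)
  set y : ℚ_[p] := (p:ℚ_[p]) ^ (-v - 1) with hy
  have hyn : ‖y‖ = (p:ℝ) ^ (v + 1) := by
    rw [hy, Padic.norm_p_zpow]; ring_nf
  have hyball : ‖y‖ ≤ (p:ℝ) ^ (-(n:ℤ)) := by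
    rw [hyn]; exact zpow_le_zpow_right₀ (le_of_lt hpR) (by omega)
  have hcy : ‖c * y‖ = (p:ℝ) := by
    rw [norm_mul, hcnorm, hyn, ← zpow_add₀ (ne_of_gt hpR0)]
    norm_num
  have hcy1 : 1 < ‖c * y‖ := by rw [hcy]; exact hpR
  set f : ℚ_[p] → ℂ := fun x => (if ‖x‖ ≤ (p:ℝ) ^ (-(n:ℤ)) then (1:ℂ) else 0) * padicChar p (c * x)
    with hf
  have hkey : ∀ x, f (x + y) = padicChar p (c * y) * f x := by
    intro x
    have hiff : ‖x + y‖ ≤ (p:ℝ) ^ (-(n:ℤ)) ↔ ‖x‖ ≤ (p:ℝ) ^ (-(n:ℤ)) := by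
      constructor
      · intro hx
        have : x = (x + y) - y := by ring
        rw [this]
        exact le_trans (nonarch_sub (x + y) y) (max_le hx hyball)
      · intro hx
        exact le_trans (Padic.nonarchimedean x y) (max_le hx hyball)
    have hchar : padicChar p (c * (x + y)) = padicChar p (c * x) * padicChar p (c * y) := by
      rw [show c * (x + y) = c * x + c * y by ring, padicChar_add]
    rw [hf]
    simp only
    rw [hchar]
    by_cases hx : ‖x‖ ≤ (p:ℝ) ^ (-(n:ℤ))
    · rw [if_pos (hiff.mpr hx), if_pos hx]; ring
    · rw [if_neg (fun hc => hx (hiff.mp hc)), if_neg hx]; ring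
  have htrans : ∫ x, f (x + y) ∂μ = ∫ x, f x ∂μ := integral_add_right_eq_self f y
  rw [integral_congr_ae (Filter.Eventually.of_forall hkey)] at htrans
  rw [integral_const_mul] at htrans
  have hne : padicChar p (c * y) - 1 ≠ 0 := sub_ne_zero.mpr (padicChar_ne_one hcy1)
  have : (padicChar p (c * y) - 1) * ∫ x, f x ∂μ = 0 := by
    rw [sub_mul, one_mul, htrans, sub_self]
  rcases mul_eq_zero.mp this with h1 | h2
  · exact absurd h1 hne
  · exact h2

lemma main_integral (hμ : μ {x : ℚ_[p] | ‖x‖ ≤ 1} = 1) (n : ℕ) (b c : ℚ_[p]) :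
    ∫ x, (if ‖x - b‖ ≤ (p:ℝ) ^ (-(n:ℤ)) then (1:ℂ) else 0) * padicChar p (c * x) ∂μ
      = padicChar p (c * b) * (((p:ℝ) ^ (-(n:ℤ)) : ℝ) : ℂ)
        * (if ‖c‖ ≤ (p:ℝ) ^ (n:ℤ) then 1 else 0) := by
  set f : ℚ_[p] → ℂ := fun x => (if ‖x - b‖ ≤ (p:ℝ) ^ (-(n:ℤ)) then (1:ℂ) else 0)
      * padicChar p (c * x) with hf
  have htrans : ∫ x, f (x + b) ∂μ = ∫ x, f x ∂μ := integral_add_right_eq_self f b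
  have hkey : ∀ x, f (x + b)
      = padicChar p (c * b) * ((if ‖x‖ ≤ (p:ℝ) ^ (-(n:ℤ)) then (1:ℂ) else 0)
          * padicChar p (c * x)) := by
    intro x
    rw [hf]
    simp only [add_sub_cancel_right]
    rw [show c * (x + b) = c * x + c * b by ring, padicChar_add]
    ring
  rw [integral_congr_ae (Filter.Eventually.of_forall hkey), integral_const_mul] at htrans
  rw [← htrans]
  by_cases hc : ‖c‖ ≤ (p:ℝ) ^ (n:ℤ)
  · rw [J_triv μ hμ hc, if_pos hc, mul_one]
  · rw [J_zero μ hc, if_neg hc, mul_zero, mul_zero]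

end Haar
end Aux

open Aux

/-- The `p`-adic Fourier transform of the restriction to `ℤ_p` of the
Kozyrev wavelet `ψ⁰_{k;ja}` (with `j ≥ 0`) equals
`ξ ↦ p^{-j/2} 1_{ℤ_p}(p^j a) χ_p(p^j a ξ) 1_{ℤ_p}(p^{-1}k + p^j ξ)`;
`μ` is the Haar measure with `μ(ℤ_p) = 1`. -/
theorem fourier_kozyrev_restricted (p : ℕ) [Fact p.Prime]
    (μ : MeasureTheory.Measure ℚ_[p]) [μ.IsAddHaarMeasure]
    (hμ : μ {x : ℚ_[p] | ‖x‖ ≤ 1} = 1)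
    (k : ℕ) (hk1 : 1 ≤ k) (hk2 : k ≤ p - 1) (j : ℤ) (hj : 0 ≤ j)
    (a : ℚ_[p]) (ha : a ∈ Ip p) (ξ : ℚ_[p]) :
    padicFourier p μ (fun x => indZ p x * kozyrev p k j a x) ξ
      = (((p : ℝ) ^ (-(j : ℝ) / 2) : ℝ) : ℂ) * indZ p ((p : ℚ_[p]) ^ j * a) *
          padicChar p ((p : ℚ_[p]) ^ j * a * ξ) *
          indZ p ((k : ℚ_[p]) / (p : ℚ_[p]) + (p : ℚ_[p]) ^ j * ξ) := by
  obtain ⟨n, rfl⟩ : ∃ n : ℕ, j = (n:ℤ) := ⟨j.toNat, (Int.toNat_of_nonneg hj).symm⟩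
  have hp1 : (1:ℝ) < (p:ℝ) := by exact_mod_cast (Fact.out : p.Prime).one_lt
  have hp0R : (0:ℝ) < (p:ℝ) := lt_trans one_pos hp1
  have hpQp : (p:ℚ_[p]) ≠ 0 := Nat.cast_ne_zero.mpr (Fact.out : p.Prime).ne_zero
  set E : ℚ_[p] := (p:ℚ_[p]) ^ ((n:ℕ):ℤ) with hE
  have hE0 : E ≠ 0 := zpow_ne_zero _ hpQp
  have hEnorm : ‖E‖ = (p:ℝ) ^ (-((n:ℕ):ℤ)) := Padic.norm_p_zpow _
  have hEinv : (p:ℚ_[p]) ^ (-((n:ℕ):ℤ)) = E⁻¹ := by rw [hE, zpow_neg]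
  have hsmall : (p:ℝ) ^ (-((n:ℕ):ℤ)) ≤ 1 := by
    calc (p:ℝ) ^ (-((n:ℕ):ℤ)) ≤ (p:ℝ) ^ (0:ℤ) :=
          zpow_le_zpow_right₀ (le_of_lt hp1) (by omega)
      _ = 1 := zpow_zero _
  have hiff : ∀ x : ℚ_[p], ‖(p:ℚ_[p]) ^ (-((n:ℕ):ℤ)) * x - a‖ ≤ 1
      ↔ ‖x - E * a‖ ≤ (p:ℝ) ^ (-((n:ℕ):ℤ)) := by
    intro x
    have hfac : x - E * a = E * ((p:ℚ_[p]) ^ (-((n:ℕ):ℤ)) * x - a) := by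
      rw [hEinv]; field_simp
    rw [hfac, norm_mul, hEnorm, mul_le_iff_le_one_right (by positivity)]
  by_cases hba : ‖E * a‖ ≤ 1
  · -- main case
    set c : ℚ_[p] := ξ + (k:ℚ_[p]) / ((p:ℚ_[p]) * E) with hc
    set C : ℂ := (((p : ℝ) ^ ((((n:ℕ):ℤ) : ℝ) / 2) : ℝ) : ℂ) with hC
    have hpoint : ∀ x : ℚ_[p], padicChar p (ξ * x) * (indZ p x * kozyrev p k ((n:ℕ):ℤ) a x)
        = (C * padicChar p (-((k:ℚ_[p]) / (p:ℚ_[p]) * a)))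
          * ((if ‖x - E * a‖ ≤ (p:ℝ) ^ (-((n:ℕ):ℤ)) then (1:ℂ) else 0)
              * padicChar p (c * x)) := by
      intro x
      rw [kozyrev, indZ, indZ]
      by_cases hx : ‖x - E * a‖ ≤ (p:ℝ) ^ (-((n:ℕ):ℤ))
      · have hcond2 : ‖(p:ℚ_[p]) ^ (-((n:ℕ):ℤ)) * x - a‖ ≤ 1 := (hiff x).mpr hx
        have hcond1 : ‖x‖ ≤ 1 := by
          have hxx : x = (x - E * a) + E * a := by ring
          rw [hxx]
          exact le_trans (Padic.nonarchimedean _ _)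
            (max_le (le_trans hx hsmall) hba)
        rw [if_pos hx, if_pos hcond1, if_pos hcond2]
        have harg : ξ * x + (k:ℚ_[p]) / (p:ℚ_[p]) * ((p:ℚ_[p]) ^ (-((n:ℕ):ℤ)) * x - a)
            = c * x + (-((k:ℚ_[p]) / (p:ℚ_[p]) * a)) := by
          rw [hEinv, hc]; field_simp; ring
        calc padicChar p (ξ * x) * ((1:ℂ) * (C * padicChar p ((k:ℚ_[p]) / (p:ℚ_[p])
                * ((p:ℚ_[p]) ^ (-((n:ℕ):ℤ)) * x - a)) * 1))
            = C * (padicChar p (ξ * x) * padicChar p ((k:ℚ_[p]) / (p:ℚ_[p])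
                * ((p:ℚ_[p]) ^ (-((n:ℕ):ℤ)) * x - a))) := by ring
          _ = C * padicChar p (ξ * x + (k:ℚ_[p]) / (p:ℚ_[p])
                * ((p:ℚ_[p]) ^ (-((n:ℕ):ℤ)) * x - a)) := by rw [padicChar_add]
          _ = C * padicChar p (c * x + (-((k:ℚ_[p]) / (p:ℚ_[p]) * a))) := by rw [harg]
          _ = C * (padicChar p (c * x) * padicChar p (-((k:ℚ_[p]) / (p:ℚ_[p]) * a))) := by
              rw [padicChar_add]
          _ = (C * padicChar p (-((k:ℚ_[p]) / (p:ℚ_[p]) * a)))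
                * ((1:ℂ) * padicChar p (c * x)) := by ring
      · have hcond2 : ¬ ‖(p:ℚ_[p]) ^ (-((n:ℕ):ℤ)) * x - a‖ ≤ 1 := fun hcc => hx ((hiff x).mp hcc)
        rw [if_neg hx, if_neg hcond2]
        ring
    rw [padicFourier]
    rw [integral_congr_ae (Filter.Eventually.of_forall hpoint), integral_const_mul]
    rw [main_integral μ hμ n (E * a) c]
    -- RHS simplifications
    have hindZba : indZ p ((p:ℚ_[p]) ^ ((n:ℕ):ℤ) * a) = 1 := by rw [indZ, if_pos hba]
    have hchar : padicChar p (-((k:ℚ_[p]) / (p:ℚ_[p]) * a)) * padicChar p (c * (E * a))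
        = padicChar p ((p:ℚ_[p]) ^ ((n:ℕ):ℤ) * a * ξ) := by
      rw [← padicChar_add]
      congr 1
      rw [hc, ← hE]
      field_simp
      ring
    have hCmul : C * (((p:ℝ) ^ (-((n:ℕ):ℤ)) : ℝ) : ℂ)
        = (((p : ℝ) ^ (-(((n:ℕ):ℤ) : ℝ) / 2) : ℝ) : ℂ) := by
      rw [hC]
      have : ((p:ℝ) ^ (-((n:ℕ):ℤ))) = (p:ℝ) ^ ((-((n:ℕ):ℤ) : ℤ) : ℝ) := by
        rw [Real.rpow_intCast]
      rw [this, ← Complex.ofReal_mul, ← Real.rpow_add hp0R]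
      congr 2
      push_cast
      ring
    have hcond : (‖c‖ ≤ (p:ℝ) ^ ((n:ℕ):ℤ)) ↔ ‖(k:ℚ_[p]) / (p:ℚ_[p]) + (p:ℚ_[p]) ^ ((n:ℕ):ℤ) * ξ‖ ≤ 1 := by
      have hfac : (k:ℚ_[p]) / (p:ℚ_[p]) + (p:ℚ_[p]) ^ ((n:ℕ):ℤ) * ξ = E * c := by
        rw [hc, ← hE]; field_simp; ring
      rw [hfac, norm_mul, hEnorm]
      rw [show (1:ℝ) = (p:ℝ) ^ (-((n:ℕ):ℤ)) * (p:ℝ) ^ ((n:ℕ):ℤ) by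
        rw [← zpow_add₀ (ne_of_gt hp0R)]; simp]
      exact (mul_le_mul_iff_right₀ (by positivity)).symm
    rw [hindZba]
    rw [indZ]
    rw [show (if ‖c‖ ≤ (p:ℝ) ^ ((n:ℕ):ℤ) then (1:ℂ) else 0)
        = (if ‖(k:ℚ_[p]) / (p:ℚ_[p]) + (p:ℚ_[p]) ^ ((n:ℕ):ℤ) * ξ‖ ≤ 1 then (1:ℂ) else 0) from
      if_congr hcond rfl rfl] at *
    calc (C * padicChar p (-((k:ℚ_[p]) / (p:ℚ_[p]) * a)))
          * (padicChar p (c * (E * a)) * (((p:ℝ) ^ (-((n:ℕ):ℤ)) : ℝ) : ℂ)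
            * (if ‖(k:ℚ_[p]) / (p:ℚ_[p]) + (p:ℚ_[p]) ^ ((n:ℕ):ℤ) * ξ‖ ≤ 1 then (1:ℂ) else 0))
        = (C * (((p:ℝ) ^ (-((n:ℕ):ℤ)) : ℝ) : ℂ))
            * (padicChar p (-((k:ℚ_[p]) / (p:ℚ_[p]) * a)) * padicChar p (c * (E * a)))
            * (if ‖(k:ℚ_[p]) / (p:ℚ_[p]) + (p:ℚ_[p]) ^ ((n:ℕ):ℤ) * ξ‖ ≤ 1 then (1:ℂ) else 0) := by
          ring
      _ = _ := by
          rw [hCmul, hchar, ← hE]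
          ring
  · -- degenerate case: empty support
    have hzero : ∀ x : ℚ_[p], padicChar p (ξ * x) * (indZ p x * kozyrev p k ((n:ℕ):ℤ) a x) = 0 := by
      intro x
      rw [kozyrev, indZ, indZ]
      by_cases h1 : ‖x‖ ≤ 1
      · by_cases h2 : ‖(p:ℚ_[p]) ^ (-((n:ℕ):ℤ)) * x - a‖ ≤ 1
        · exfalso
          apply hba
          have hx : ‖x - E * a‖ ≤ (p:ℝ) ^ (-((n:ℕ):ℤ)) := (hiff x).mp h2
          have hxx : E * a = x - (x - E * a) := by ring
          rw [hxx]
          exact le_trans (nonarch_sub _ _) (max_le h1 (le_trans hx hsmall))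
        · rw [if_neg h2]; ring
      · rw [if_neg h1]; ring
    rw [padicFourier, integral_congr_ae (Filter.Eventually.of_forall hzero), integral_zero]
    have hind0 : indZ p ((p:ℚ_[p]) ^ ((n:ℕ):ℤ) * a) = 0 := by
      rw [indZ, if_neg hba]
    rw [hind0]
    ring
end
end

section
/- Let α ∈ ℂ and let φ be a Schwartz function on ℝ with ∫_ℝ x^n φ(x) dx = 0 for every integer n ≥ 0 (i.e. φ belongs to the real Lizorkin space Φ(ℝ)). Define g : ℝ → ℂ by g(ξ) = |ξ|^α · 𝓕φ(ξ) for ξ ≠ 0 (where |ξ|^α = exp(α log|ξ|)) and g(0) = 0. Then g is a Schwartz function all of whose derivatives vanish at 0; consequently the Riesz fractional derivative D^αφ := 𝓕^{−1}g is again a Schwartz function with ∫_ℝ x^n (D^αφ)(x) dx = 0 for all n ≥ 0, and moreover D^{−α}(D^αφ) = φ. In particular the Lizorkin space Φ(ℝ) is invariant under D^α and D^α(Φ(ℝ)) = Φ(ℝ). -/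
open MeasureTheory FourierTransform Filter Set
open scoped Real Topology ContDiff

noncomputable section

namespace LizAux

/-- local sign -/
def lsgn (ξ : ℝ) : ℝ := if ξ < 0 then -1 else 1

lemma lsgn_mul_pos {ξ : ℝ} (hξ : ξ ≠ 0) : 0 < lsgn ξ * ξ := by
  rcases lt_or_gt_of_ne hξ with h | h
  · simp only [lsgn, if_pos h]; nlinarith
  · simp only [lsgn, if_neg (not_lt.2 h.le)]; nlinarith

lemma abs_eq_lsgn_mul {ξ : ℝ} (hξ : ξ ≠ 0) : |ξ| = lsgn ξ * ξ := by
  rcases lt_or_gt_of_ne hξ with h | h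
  · simp [lsgn, if_pos h, abs_of_neg h]
  · simp [lsgn, if_neg (not_lt.2 h.le), abs_of_pos h]

lemma lsgn_eventually {ξ : ℝ} (hξ : ξ ≠ 0) : ∀ᶠ x in 𝓝 ξ, lsgn x = lsgn ξ := by
  rcases lt_or_gt_of_ne hξ with h | h
  · filter_upwards [IsOpen.eventually_mem isOpen_Iio (show ξ ∈ Iio (0:ℝ) from h)] with x hx
    simp [lsgn, if_pos h, if_pos (mem_Iio.1 hx)]
  · filter_upwards [IsOpen.eventually_mem isOpen_Ioi (show ξ ∈ Ioi (0:ℝ) from h)] with x hx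
    simp [lsgn, if_neg (not_lt.2 h.le), if_neg (not_lt.2 (le_of_lt (mem_Ioi.1 hx)))]

lemma abs_eventually {ξ : ℝ} (hξ : ξ ≠ 0) : ∀ᶠ x in 𝓝 ξ, |x| = lsgn ξ * x := by
  filter_upwards [lsgn_eventually hξ, eventually_ne_nhds hξ] with x h1 h2
  rw [abs_eq_lsgn_mul h2, h1]

lemma norm_lsgn (ξ : ℝ) : ‖((lsgn ξ : ℝ) : ℂ)‖ = 1 := by
  rcases lt_or_ge ξ 0 with h | h
  · simp [lsgn, if_pos h]
  · simp [lsgn, if_neg (not_lt.2 h)]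

/-- the symbol function `x ↦ |x| ^ α` -/
def absCpow (α : ℂ) : ℝ → ℂ := fun x => ((|x| : ℝ) : ℂ) ^ α

lemma hasDerivAt_absCpow (β : ℂ) {ξ : ℝ} (hξ : ξ ≠ 0) :
    HasDerivAt (absCpow β) (β * ((lsgn ξ : ℝ) : ℂ) * ((|ξ| : ℝ) : ℂ) ^ (β - 1)) ξ := by
  have hc : 0 < lsgn ξ * ξ := lsgn_mul_pos hξ
  have hr : HasDerivAt (fun x : ℝ => lsgn ξ * x) (lsgn ξ) ξ := by
    simpa using (hasDerivAt_id ξ).const_mul (lsgn ξ)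
  have h1 : HasDerivAt (fun y : ℝ => (y : ℂ) ^ β)
      (β * ((lsgn ξ * ξ : ℝ) : ℂ) ^ (β - 1)) (lsgn ξ * ξ) :=
    ((Complex.hasStrictDerivAt_cpow_const
      (Complex.ofReal_mem_slitPlane.2 hc)).hasDerivAt).comp_ofReal
  have h2 : HasDerivAt (fun x : ℝ => ((lsgn ξ * x : ℝ) : ℂ) ^ β)
      (lsgn ξ • (β * ((lsgn ξ * ξ : ℝ) : ℂ) ^ (β - 1))) ξ :=
    HasDerivAt.scomp ξ h1 hr
  have heq : absCpow β =ᶠ[𝓝 ξ] fun x : ℝ => ((lsgn ξ * x : ℝ) : ℂ) ^ β := by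
    filter_upwards [abs_eventually hξ] with x hx
    simp only [absCpow, hx]
  have h3 := h2.congr_of_eventuallyEq heq
  refine h3.congr_deriv ?_
  rw [abs_eq_lsgn_mul hξ, Complex.real_smul]
  ring

/-- the constants in the iterated derivative -/
def ck (α : ℂ) (k : ℕ) : ℂ := ∏ j ∈ Finset.range k, (α - j)

lemma iteratedDeriv_absCpow (α : ℂ) (k : ℕ) : ∀ ξ : ℝ, ξ ≠ 0 →
    iteratedDeriv k (absCpow α) ξ
      = ck α k * ((lsgn ξ : ℝ) : ℂ) ^ k * ((|ξ| : ℝ) : ℂ) ^ (α - k) := by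
  induction k with
  | zero => intro ξ hξ; simp [ck, absCpow]
  | succ k ih =>
    intro ξ hξ
    have heq : iteratedDeriv k (absCpow α) =ᶠ[𝓝 ξ]
        fun x => (ck α k * ((lsgn ξ : ℝ) : ℂ) ^ k) * absCpow (α - k) x := by
      filter_upwards [eventually_ne_nhds hξ, lsgn_eventually hξ] with x hx hsx
      rw [ih x hx, hsx]
      simp only [absCpow]
    rw [iteratedDeriv_succ, heq.deriv_eq,
      ((hasDerivAt_absCpow (α - k) hξ).const_mul (ck α k * ((lsgn ξ : ℝ) : ℂ) ^ k)).deriv]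
    have hexp : (α - (k:ℂ)) - 1 = α - ((k+1 : ℕ) : ℂ) := by push_cast; ring
    have hck : ck α (k+1) = ck α k * (α - (k:ℂ)) := by
      simp [ck, Finset.prod_range_succ]
    rw [hexp, hck]
    push_cast
    ring

lemma norm_iteratedDeriv_absCpow (α : ℂ) (k : ℕ) {ξ : ℝ} (hξ : ξ ≠ 0) :
    ‖iteratedDeriv k (absCpow α) ξ‖ = ‖ck α k‖ * |ξ| ^ (α.re - k) := by
  rw [iteratedDeriv_absCpow α k ξ hξ, norm_mul, norm_mul, norm_pow, norm_lsgn, one_pow, mul_one]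
  congr 1
  rw [Complex.norm_cpow_eq_rpow_re_of_pos (abs_pos.2 hξ)]
  norm_num [Complex.sub_re]

lemma contDiffAt_absCpow (α : ℂ) {n : WithTop ℕ∞} {ξ : ℝ} (hξ : ξ ≠ 0) :
    ContDiffAt ℝ n (absCpow α) ξ := by
  have hc : 0 < lsgn ξ * ξ := lsgn_mul_pos hξ
  have h1 : ContDiffAt ℝ n (fun x : ℝ => ((lsgn ξ * x : ℝ) : ℂ)) ξ :=
    (Complex.ofRealCLM.contDiff.comp (contDiff_const.mul contDiff_id)).contDiffAt
  have h2 : ContDiffAt ℂ n Complex.log ((lsgn ξ * ξ : ℝ) : ℂ) :=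
    Complex.contDiffAt_log (Complex.ofReal_mem_slitPlane.2 hc)
  have h3 : ContDiffAt ℝ n
      (fun x : ℝ => Complex.exp (Complex.log ((lsgn ξ * x : ℝ) : ℂ) * α)) ξ := by
    apply (Complex.contDiff_exp (𝕜 := ℝ)).contDiffAt.comp
    exact (((h2.restrict_scalars ℝ).comp ξ h1).mul contDiffAt_const)
  apply h3.congr_of_eventuallyEq
  filter_upwards [abs_eventually hξ,
    (isOpen_lt continuous_const (continuous_const.mul continuous_id)).eventually_mem
      (show (0:ℝ) < lsgn ξ * ξ from hc)] with x hx h0x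
  have hne : ((lsgn ξ * x : ℝ) : ℂ) ≠ 0 := by
    exact_mod_cast (ne_of_gt (show (0:ℝ) < lsgn ξ * x from h0x))
  simp only [absCpow, hx]
  rw [Complex.cpow_def_of_ne_zero hne]

lemma contDiffOn_absCpow (α : ℂ) (n : WithTop ℕ∞) :
    ContDiffOn ℝ n (absCpow α) {(0:ℝ)}ᶜ :=
  fun ξ hξ => (contDiffAt_absCpow α (by simpa using hξ)).contDiffWithinAt

lemma iteratedDerivWithin_of_isOpen' {f : ℝ → ℂ} {s : Set ℝ} (hs : IsOpen s) {x : ℝ}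
    (hx : x ∈ s) (n : ℕ) : iteratedDerivWithin n f s x = iteratedDeriv n f x := by
  simp only [iteratedDerivWithin, iteratedDeriv, iteratedFDerivWithin_of_isOpen n hs hx]

lemma contDiff_infty_iteratedDeriv (f : ℝ → ℂ) (hf : ContDiff ℝ ∞ f) (k : ℕ) :
    ContDiff ℝ ∞ (iteratedDeriv k f) := by
  induction k with
  | zero => simpa
  | succ k ih => rw [iteratedDeriv_succ]; exact (contDiff_infty_iff_deriv.1 ih).2

lemma iteratedDeriv_iteratedDeriv (f : ℝ → ℂ) (m k : ℕ) :
    iteratedDeriv m (iteratedDeriv k f) = iteratedDeriv (m + k) f := by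
  induction m with
  | zero => simp
  | succ m ih =>
    have h1 : m + 1 + k = (m + k) + 1 := by omega
    rw [iteratedDeriv_succ, ih, h1, iteratedDeriv_succ]

lemma le_pow_of_derivs_zero : ∀ (N : ℕ) (f : ℝ → ℂ), ContDiff ℝ ∞ f →
    (∀ k, iteratedDeriv k f 0 = 0) →
    ∃ M : ℝ, 0 ≤ M ∧ ∀ ξ : ℝ, |ξ| ≤ 1 → ‖f ξ‖ ≤ M * |ξ| ^ N := by
  intro N
  induction N with
  | zero =>
    intro f hf _
    obtain ⟨M, hM⟩ := (isCompact_Icc (a := (-1:ℝ)) (b := 1)).exists_bound_of_continuousOn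
      hf.continuous.continuousOn
    refine ⟨max M 0, le_max_right _ _, fun ξ hξ => ?_⟩
    simp only [pow_zero, mul_one]
    exact le_trans (hM ξ (abs_le.1 hξ)) (le_max_left _ _)
  | succ N ih =>
    intro f hf h0
    have hf' : ContDiff ℝ ∞ (deriv f) := (contDiff_infty_iff_deriv.1 hf).2
    have h0' : ∀ k, iteratedDeriv k (deriv f) 0 = 0 := fun k => by
      rw [← iteratedDeriv_succ']; exact h0 (k+1)
    obtain ⟨M, hM0, hM⟩ := ih (deriv f) hf' h0'
    refine ⟨M, hM0, fun ξ hξ => ?_⟩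
    have hfd : ∀ x ∈ uIcc (0:ℝ) ξ, HasDerivWithinAt f (deriv f x) (uIcc (0:ℝ) ξ) x := fun x _ =>
      ((hf.differentiable (by norm_num)) x).hasDerivAt.hasDerivWithinAt
    have habs : ∀ x ∈ uIcc (0:ℝ) ξ, |x| ≤ |ξ| := by
      intro x hx
      rcases le_total (0:ℝ) ξ with h | h
      · rw [uIcc_of_le h] at hx
        exact abs_le.2 ⟨by nlinarith [hx.1, abs_nonneg ξ], by nlinarith [hx.2, le_abs_self ξ]⟩
      · rw [uIcc_of_ge h] at hx
        exact abs_le.2 ⟨by nlinarith [hx.1, neg_abs_le ξ], by nlinarith [hx.2, abs_nonneg ξ]⟩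
    have hbound : ∀ x ∈ uIcc (0:ℝ) ξ, ‖deriv f x‖ ≤ M * |ξ| ^ N := by
      intro x hx
      refine le_trans (hM x (le_trans (habs x hx) hξ)) ?_
      exact mul_le_mul_of_nonneg_left (pow_le_pow_left₀ (abs_nonneg _) (habs x hx) N) hM0
    have hle := (convex_uIcc (0:ℝ) ξ).norm_image_sub_le_of_norm_hasDerivWithin_le hfd hbound
      left_mem_uIcc right_mem_uIcc
    have hf0 : f 0 = 0 := by simpa using h0 0
    rw [hf0, sub_zero, sub_zero, Real.norm_eq_abs] at hle
    calc ‖f ξ‖ ≤ M * |ξ| ^ N * |ξ| := hle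
      _ = M * |ξ| ^ (N + 1) := by ring

lemma le_pow_of_derivs_zero' (f : ℝ → ℂ) (hf : ContDiff ℝ ∞ f)
    (h0 : ∀ k, iteratedDeriv k f 0 = 0) (k N : ℕ) :
    ∃ M : ℝ, 0 ≤ M ∧ ∀ ξ : ℝ, |ξ| ≤ 1 → ‖iteratedDeriv k f ξ‖ ≤ M * |ξ| ^ N :=
  le_pow_of_derivs_zero N (iteratedDeriv k f) (contDiff_infty_iteratedDeriv f hf k)
    (fun m => by rw [iteratedDeriv_iteratedDeriv]; exact h0 (m + k))

/-- the multiplied symbol, with value `0` at the origin -/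
def mulSym (α : ℂ) (ψ : ℝ → ℂ) : ℝ → ℂ := fun ξ => if ξ = 0 then 0 else absCpow α ξ * ψ ξ

section MulSym

variable (α : ℂ) (ψ : SchwartzMap ℝ ℂ)

lemma mulSym_eqOn : EqOn (mulSym α ⇑ψ) (fun x => absCpow α x * ψ x) {(0:ℝ)}ᶜ := by
  intro x hx
  simp only [mulSym, if_neg (by simpa using hx)]

lemma hasDerivAt_zero_of_sq (f : ℝ → ℂ) (hf0 : f 0 = 0) (C : ℝ)
    (h : ∀ ξ : ℝ, ξ ≠ 0 → |ξ| ≤ 1 → ‖f ξ‖ ≤ C * |ξ| ^ 2) : HasDerivAt f 0 0 := by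
  rw [hasDerivAt_iff_isLittleO]
  simp only [sub_zero, smul_zero, hf0]
  have h1 : (fun x : ℝ => f x) =O[𝓝 0] (fun x => x ^ 2) := by
    rw [Asymptotics.isBigO_iff]
    refine ⟨C, ?_⟩
    filter_upwards [Metric.ball_mem_nhds (0:ℝ) one_pos] with x hx
    rcases eq_or_ne x 0 with rfl | hx0
    · simp [hf0]
    · have hx1 : |x| ≤ 1 := by
        have := mem_ball_iff_norm.1 hx
        simp only [sub_zero, Real.norm_eq_abs] at this
        linarith
      calc ‖f x‖ ≤ C * |x| ^ 2 := h x hx0 hx1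
        _ = C * ‖x ^ 2‖ := by rw [norm_pow, Real.norm_eq_abs]
  have h2 : (fun x : ℝ => x ^ 2) =o[𝓝 0] (fun x : ℝ => x) := by
    have hx0 : (fun x : ℝ => x) =o[𝓝 0] (fun _ : ℝ => (1:ℝ)) :=
      (Asymptotics.isLittleO_one_iff ℝ).2 (by exact Filter.tendsto_id (x := 𝓝 (0:ℝ)))
    have := hx0.mul_isBigO (Asymptotics.isBigO_refl (fun x : ℝ => x) (𝓝 0))
    simpa [pow_two] using this
  exact h1.trans_isLittleO h2

lemma contDiffOn_mulSym : ContDiffOn ℝ ∞ (mulSym α ⇑ψ) {(0:ℝ)}ᶜ :=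
  ((contDiffOn_absCpow α ∞).mul ((ψ.smooth ⊤).contDiffOn)).congr (mulSym_eqOn α ψ)

lemma leibniz_bound (n : ℕ) {ξ : ℝ} (hξ : ξ ≠ 0) :
    ‖iteratedDeriv n (mulSym α ⇑ψ) ξ‖ ≤
      ∑ j ∈ Finset.range (n+1), (n.choose j : ℝ) * (‖ck α j‖ * |ξ| ^ (α.re - j)) *
        ‖iteratedDeriv (n-j) (⇑ψ) ξ‖ := by
  have hs : IsOpen ({(0:ℝ)}ᶜ : Set ℝ) := isOpen_compl_singleton
  have hx : ξ ∈ ({(0:ℝ)}ᶜ : Set ℝ) := by simpa using hξ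
  have husm : ContDiffOn ℝ ∞ (absCpow α) {(0:ℝ)}ᶜ := contDiffOn_absCpow α ∞
  have hpsm : ContDiffOn ℝ ∞ (⇑ψ) {(0:ℝ)}ᶜ := (ψ.smooth ⊤).contDiffOn
  calc ‖iteratedDeriv n (mulSym α ⇑ψ) ξ‖
      = ‖iteratedFDerivWithin ℝ n (mulSym α ⇑ψ) {(0:ℝ)}ᶜ ξ‖ := by
        rw [iteratedFDerivWithin_of_isOpen n hs hx, norm_iteratedFDeriv_eq_norm_iteratedDeriv]
    _ = ‖iteratedFDerivWithin ℝ n (fun x => absCpow α x * ψ x) {(0:ℝ)}ᶜ ξ‖ := by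
        rw [iteratedFDerivWithin_congr (mulSym_eqOn α ψ) hx]
    _ ≤ ∑ j ∈ Finset.range (n+1), (n.choose j : ℝ) *
          ‖iteratedFDerivWithin ℝ j (absCpow α) {(0:ℝ)}ᶜ ξ‖ *
          ‖iteratedFDerivWithin ℝ (n-j) (⇑ψ) {(0:ℝ)}ᶜ ξ‖ :=
        norm_iteratedFDerivWithin_mul_le husm hpsm hs.uniqueDiffOn hx (by exact_mod_cast (ENat.coe_lt_top n).le)
    _ ≤ _ := by
        refine Finset.sum_le_sum fun j hj => ?_
        rw [iteratedFDerivWithin_of_isOpen j hs hx, iteratedFDerivWithin_of_isOpen (n-j) hs hx,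
          norm_iteratedFDeriv_eq_norm_iteratedDeriv, norm_iteratedFDeriv_eq_norm_iteratedDeriv,
          norm_iteratedDeriv_absCpow α j hξ, mul_assoc, mul_assoc]

lemma near_zero_bound (hψ0 : ∀ k, iteratedDeriv k (⇑ψ) 0 = 0) (n P : ℕ) :
    ∃ C : ℝ, 0 ≤ C ∧ ∀ ξ : ℝ, ξ ≠ 0 → |ξ| ≤ 1 →
      ‖iteratedDeriv n (mulSym α ⇑ψ) ξ‖ ≤ C * |ξ| ^ P := by
  obtain ⟨m0, hm0⟩ := exists_nat_ge (-α.re)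
  set N : ℕ := n + P + m0 with hN
  have H := fun j : ℕ => le_pow_of_derivs_zero' (⇑ψ) (ψ.smooth ⊤) hψ0 j N
  choose M hM0 hM using H
  refine ⟨∑ j ∈ Finset.range (n+1), (n.choose j : ℝ) * ‖ck α j‖ * M (n-j),
    Finset.sum_nonneg fun j _ => by have := hM0 (n-j); positivity, fun ξ hξ hξ1 => ?_⟩
  have hpos : (0:ℝ) < |ξ| := abs_pos.2 hξ
  refine le_trans (leibniz_bound α ψ n hξ) ?_
  rw [Finset.sum_mul]
  refine Finset.sum_le_sum fun j hj => ?_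
  have hjn : j ≤ n := by
    have := Finset.mem_range.1 hj; omega
  have hstep : |ξ| ^ (α.re - j) * ‖iteratedDeriv (n-j) (⇑ψ) ξ‖ ≤ M (n-j) * |ξ| ^ P := by
    calc |ξ| ^ (α.re - j) * ‖iteratedDeriv (n-j) (⇑ψ) ξ‖
        ≤ |ξ| ^ (α.re - j) * (M (n-j) * |ξ| ^ N) := by
          exact mul_le_mul_of_nonneg_left (hM (n-j) ξ hξ1) (Real.rpow_nonneg hpos.le _)
      _ = M (n-j) * (|ξ| ^ (α.re - j) * |ξ| ^ ((N:ℝ))) := by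
          rw [Real.rpow_natCast]; ring
      _ = M (n-j) * |ξ| ^ (α.re - j + N) := by rw [← Real.rpow_add hpos]
      _ ≤ M (n-j) * |ξ| ^ ((P:ℝ)) := by
          refine mul_le_mul_of_nonneg_left ?_ (hM0 (n-j))
          refine Real.rpow_le_rpow_of_exponent_ge hpos hξ1 ?_
          have hj' : (j:ℝ) ≤ (n:ℝ) := by exact_mod_cast hjn
          have hm0' : -α.re ≤ (m0:ℝ) := hm0
          push_cast [hN]
          linarith
      _ = M (n-j) * |ξ| ^ P := by rw [Real.rpow_natCast]
  calc (n.choose j : ℝ) * (‖ck α j‖ * |ξ| ^ (α.re - j)) * ‖iteratedDeriv (n-j) (⇑ψ) ξ‖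
      = (n.choose j : ℝ) * ‖ck α j‖ * (|ξ| ^ (α.re - j) * ‖iteratedDeriv (n-j) (⇑ψ) ξ‖) := by
        ring
    _ ≤ (n.choose j : ℝ) * ‖ck α j‖ * (M (n-j) * |ξ| ^ P) := by
        refine mul_le_mul_of_nonneg_left hstep (by positivity)
    _ = (n.choose j : ℝ) * ‖ck α j‖ * M (n-j) * |ξ| ^ P := by ring

lemma diffAt_ne_zero (n : ℕ) {ξ : ℝ} (hξ : ξ ≠ 0) :
    DifferentiableAt ℝ (iteratedDeriv n (mulSym α ⇑ψ)) ξ := by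
  have hs : IsOpen ({(0:ℝ)}ᶜ : Set ℝ) := isOpen_compl_singleton
  have hx : ξ ∈ ({(0:ℝ)}ᶜ : Set ℝ) := by simpa using hξ
  have h1 : DifferentiableWithinAt ℝ (iteratedDerivWithin n (mulSym α ⇑ψ) {(0:ℝ)}ᶜ)
      ({(0:ℝ)}ᶜ : Set ℝ) ξ := by
    exact (contDiffOn_mulSym α ψ).differentiableOn_iteratedDerivWithin
      (by exact_mod_cast ENat.coe_lt_top n) hs.uniqueDiffOn ξ hx
  have h2 : DifferentiableAt ℝ (iteratedDerivWithin n (mulSym α ⇑ψ) {(0:ℝ)}ᶜ) ξ :=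
    h1.differentiableAt (hs.mem_nhds hx)
  refine h2.congr_of_eventuallyEq ?_
  filter_upwards [hs.eventually_mem hx] with x hx'
  exact (iteratedDerivWithin_of_isOpen' hs hx' n).symm

lemma derivs_zero_mulSym (hψ0 : ∀ k, iteratedDeriv k (⇑ψ) 0 = 0) :
    ∀ n : ℕ, iteratedDeriv n (mulSym α ⇑ψ) 0 = 0 ∧
      HasDerivAt (iteratedDeriv n (mulSym α ⇑ψ)) 0 0 := by
  intro n
  induction n with
  | zero =>
    constructor
    · simp [mulSym]
    · obtain ⟨C, hC0, hC⟩ := near_zero_bound α ψ hψ0 0 2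
      exact hasDerivAt_zero_of_sq _ (by simp [mulSym]) C (by simpa using hC)
  | succ n ih =>
    have hval : iteratedDeriv (n+1) (mulSym α ⇑ψ) 0 = 0 := by
      rw [iteratedDeriv_succ]; exact ih.2.deriv
    refine ⟨hval, ?_⟩
    obtain ⟨C, hC0, hC⟩ := near_zero_bound α ψ hψ0 (n+1) 2
    exact hasDerivAt_zero_of_sq _ hval C hC

lemma contDiff_mulSym (hψ0 : ∀ k, iteratedDeriv k (⇑ψ) 0 = 0) :
    ContDiff ℝ ∞ (mulSym α ⇑ψ) := by
  refine contDiff_of_differentiable_iteratedDeriv fun m _ => ?_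
  intro ξ
  rcases eq_or_ne ξ 0 with rfl | hξ
  · exact ((derivs_zero_mulSym α ψ hψ0 m).2).differentiableAt
  · exact diffAt_ne_zero α ψ m hξ

lemma decay_mulSym (hψ0 : ∀ k, iteratedDeriv k (⇑ψ) 0 = 0) (k n : ℕ) :
    ∃ C : ℝ, ∀ x : ℝ, ‖x‖ ^ k * ‖iteratedFDeriv ℝ n (mulSym α ⇑ψ) x‖ ≤ C := by
  obtain ⟨C1, hC10, hC1⟩ := near_zero_bound α ψ hψ0 n 0
  obtain ⟨m0, hm0⟩ := exists_nat_ge α.re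
  have H := fun j : ℕ => ψ.decay (k + m0) j
  choose D hD0 hD using H
  set C2 : ℝ := ∑ j ∈ Finset.range (n+1), (n.choose j : ℝ) * ‖ck α j‖ * D (n-j) with hC2
  refine ⟨max C1 C2, fun x => ?_⟩
  rw [norm_iteratedFDeriv_eq_norm_iteratedDeriv]
  rcases le_or_gt |x| 1 with hx1 | hx1
  · -- near: |x| ≤ 1
    have hb : ‖iteratedDeriv n (mulSym α ⇑ψ) x‖ ≤ C1 := by
      rcases eq_or_ne x 0 with rfl | hx0
      · rw [(derivs_zero_mulSym α ψ hψ0 n).1]; simpa using hC10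
      · simpa using hC1 x hx0 hx1
    calc ‖x‖ ^ k * ‖iteratedDeriv n (mulSym α ⇑ψ) x‖ ≤ 1 * C1 := by
          refine mul_le_mul ?_ hb (norm_nonneg _) one_pos.le
          calc ‖x‖ ^ k ≤ 1 ^ k := pow_le_pow_left₀ (norm_nonneg _) (by simpa using hx1) k
            _ = 1 := one_pow k
      _ = C1 := one_mul C1
      _ ≤ max C1 C2 := le_max_left _ _
  · -- far: |x| > 1
    have hx0 : x ≠ 0 := fun h => by rw [h, abs_zero] at hx1; linarith
    have hpos : (0:ℝ) < |x| := abs_pos.2 hx0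
    refine le_trans ?_ (le_max_right C1 C2)
    have hle := leibniz_bound α ψ n hx0
    calc ‖x‖ ^ k * ‖iteratedDeriv n (mulSym α ⇑ψ) x‖
        ≤ ‖x‖ ^ k * (∑ j ∈ Finset.range (n+1), (n.choose j : ℝ) * (‖ck α j‖ * |x| ^ (α.re - j)) *
            ‖iteratedDeriv (n-j) (⇑ψ) x‖) := by
          exact mul_le_mul_of_nonneg_left hle (by positivity)
      _ = ∑ j ∈ Finset.range (n+1), ‖x‖ ^ k * ((n.choose j : ℝ) * (‖ck α j‖ * |x| ^ (α.re - j)) *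
            ‖iteratedDeriv (n-j) (⇑ψ) x‖) := Finset.mul_sum _ _ _
      _ ≤ C2 := by
          rw [hC2]
          refine Finset.sum_le_sum fun j hj => ?_
          have h1 : |x| ^ (α.re - (j:ℝ)) ≤ |x| ^ ((m0:ℕ):ℝ) := by
            refine Real.rpow_le_rpow_of_exponent_le hx1.le ?_
            have : (0:ℝ) ≤ (j:ℝ) := by positivity
            push_cast
            linarith
          have h2 : |x| ^ ((m0:ℕ):ℝ) = |x| ^ (m0:ℕ) := Real.rpow_natCast _ _
          have hterm : ‖x‖ ^ k * ((n.choose j : ℝ) * (‖ck α j‖ * |x| ^ (α.re - j)) *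
              ‖iteratedDeriv (n-j) (⇑ψ) x‖)
              ≤ (n.choose j : ℝ) * ‖ck α j‖ *
                (‖x‖ ^ (k + m0) * ‖iteratedDeriv (n-j) (⇑ψ) x‖) := by
            have hxx : ‖x‖ ^ k * |x| ^ (α.re - (j:ℝ)) ≤ ‖x‖ ^ (k + m0) := by
              calc ‖x‖ ^ k * |x| ^ (α.re - (j:ℝ)) ≤ ‖x‖ ^ k * |x| ^ (m0:ℕ) := by
                    rw [← h2]
                    exact mul_le_mul_of_nonneg_left h1 (by positivity)
                _ = ‖x‖ ^ (k + m0) := by rw [Real.norm_eq_abs, pow_add]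
            calc ‖x‖ ^ k * ((n.choose j : ℝ) * (‖ck α j‖ * |x| ^ (α.re - j)) *
                  ‖iteratedDeriv (n-j) (⇑ψ) x‖)
                = (n.choose j : ℝ) * ‖ck α j‖ *
                  ((‖x‖ ^ k * |x| ^ (α.re - (j:ℝ))) * ‖iteratedDeriv (n-j) (⇑ψ) x‖) := by ring
              _ ≤ (n.choose j : ℝ) * ‖ck α j‖ *
                  (‖x‖ ^ (k + m0) * ‖iteratedDeriv (n-j) (⇑ψ) x‖) := by
                  refine mul_le_mul_of_nonneg_left ?_ (by positivity)
                  exact mul_le_mul_of_nonneg_right hxx (norm_nonneg _)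
          refine le_trans hterm ?_
          refine mul_le_mul_of_nonneg_left ?_ (by positivity)
          rw [← norm_iteratedFDeriv_eq_norm_iteratedDeriv]
          exact hD (n-j) x

end MulSym

lemma fourier_iteratedDeriv_zero (f : SchwartzMap ℝ ℂ) (n : ℕ) :
    iteratedDeriv n (FourierTransform.fourier ⇑f) 0
      = (-(2 * π * Complex.I)) ^ n * ∫ x : ℝ, (x:ℂ) ^ n * f x := by
  have hint : ∀ k : ℕ, (k:ℕ∞) ≤ (n:ℕ∞) → Integrable (fun x : ℝ => x ^ k • f x) := by
    intro k _
    refine ((f.integrable_pow_mul volume k).mono' ?_ ?_)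
    · exact ((continuous_pow k).smul f.continuous).aestronglyMeasurable
    · refine Eventually.of_forall fun x => ?_
      rw [norm_smul]
      simp [Real.norm_eq_abs, abs_pow]
  rw [Real.iteratedDeriv_fourier (N := (n:ℕ∞)) hint le_rfl]
  have hfun : (fun x : ℝ => (-2 * π * Complex.I * x) ^ n • f x)
      = fun x : ℝ => (-(2 * π * Complex.I)) ^ n * ((x:ℂ) ^ n * f x) := by
    funext x
    rw [smul_eq_mul, ← mul_assoc, ← mul_pow]
    ring_nf
  rw [hfun, Real.fourier_eq]
  simp only [inner_zero_right, neg_zero, AddChar.map_zero_eq_one, one_smul]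
  exact integral_const_mul _ _

end LizAux

/-- Multiplication of the Fourier transform of `φ` by the symbol `|ξ|^α`
(set to `0` at `ξ = 0`):  `g(ξ) = |ξ|^α · 𝓕φ(ξ)` for `ξ ≠ 0` and `g(0) = 0`. -/
def rieszSymbolMulR (α : ℂ) (φ : ℝ → ℂ) : ℝ → ℂ :=
  fun ξ => if ξ = 0 then 0 else ((|ξ| : ℝ) : ℂ) ^ α * FourierTransform.fourier φ ξ

/-- The Riesz fractional operator `D^α φ = 𝓕⁻¹[|ξ|^α 𝓕φ]`. -/
def rieszFracDeriv (α : ℂ) (φ : ℝ → ℂ) : ℝ → ℂ :=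
  FourierTransformInv.fourierInv (rieszSymbolMulR α φ)

/-- Let `α ∈ ℂ` and let `φ` be a Schwartz function all of whose moments
vanish (`φ` in the real Lizorkin space).  Then `g = |·|^α·𝓕φ` (with `g(0) = 0`) is a
Schwartz function all of whose derivatives vanish at `0`; `D^αφ = 𝓕⁻¹g` is again a
Schwartz function with all moments vanishing; and `D^{-α}(D^αφ) = φ`. -/
theorem lizorkin_invariant_riesz_fractional (α : ℂ) (φ : SchwartzMap ℝ ℂ)
    (hφ : ∀ n : ℕ, ∫ x : ℝ, (x : ℂ) ^ n * φ x = 0) :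
    (∃ G : SchwartzMap ℝ ℂ, ⇑G = rieszSymbolMulR α ⇑φ) ∧
    (∀ n : ℕ, iteratedDeriv n (rieszSymbolMulR α ⇑φ) 0 = 0) ∧
    (∃ D : SchwartzMap ℝ ℂ, ⇑D = rieszFracDeriv α ⇑φ ∧
        ∀ n : ℕ, ∫ x : ℝ, (x : ℂ) ^ n * D x = 0) ∧
    rieszFracDeriv (-α) (rieszFracDeriv α ⇑φ) = ⇑φ := by
  classical
  set ψS : SchwartzMap ℝ ℂ := FourierTransform.fourierCLE ℂ (SchwartzMap ℝ ℂ) φ with hψS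
  have hψcoe : ⇑ψS = FourierTransform.fourier ⇑φ := rfl
  have hψ0 : ∀ k, iteratedDeriv k (⇑ψS) 0 = 0 := by
    intro k
    rw [hψcoe, LizAux.fourier_iteratedDeriv_zero φ k, hφ k, mul_zero]
  have hsym : rieszSymbolMulR α ⇑φ = LizAux.mulSym α ⇑ψS := by
    funext ξ
    simp only [rieszSymbolMulR, LizAux.mulSym, LizAux.absCpow, hψcoe]
  set G : SchwartzMap ℝ ℂ := ⟨LizAux.mulSym α ⇑ψS, LizAux.contDiff_mulSym α ψS hψ0,
    LizAux.decay_mulSym α ψS hψ0⟩ with hG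
  have hGcoe : ⇑G = rieszSymbolMulR α ⇑φ := by rw [hsym]; rfl
  have hpart2 : ∀ n : ℕ, iteratedDeriv n (rieszSymbolMulR α ⇑φ) 0 = 0 := by
    intro n; rw [hsym]; exact (LizAux.derivs_zero_mulSym α ψS hψ0 n).1
  set D : SchwartzMap ℝ ℂ := (FourierTransform.fourierCLE ℂ (SchwartzMap ℝ ℂ)).symm G with hD
  have hDcoe : ⇑D = rieszFracDeriv α ⇑φ := by
    have h1 : ⇑D = FourierTransformInv.fourierInv ⇑G := by
      rw [hD, FourierTransform.fourierCLE_symm_apply, SchwartzMap.fourierInv_coe]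
    rw [h1, hGcoe]
    rfl
  have hFD : FourierTransform.fourier ⇑D = ⇑G := by
    have h2 : FourierTransform.fourierCLE ℂ (SchwartzMap ℝ ℂ) D = G :=
      (FourierTransform.fourierCLE ℂ (SchwartzMap ℝ ℂ)).apply_symm_apply G
    rw [← h2]
    rfl
  have hDmom : ∀ n : ℕ, ∫ x : ℝ, (x:ℂ) ^ n * D x = 0 := by
    intro n
    have h3 := LizAux.fourier_iteratedDeriv_zero D n
    rw [hFD] at h3
    have h4 : iteratedDeriv n (⇑G) 0 = 0 := by rw [hGcoe]; exact hpart2 n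
    rw [h4] at h3
    have hne : (-(2 * Real.pi * Complex.I)) ^ n ≠ 0 := by
      apply pow_ne_zero
      simp [Real.pi_ne_zero, Complex.I_ne_zero]
    exact (mul_eq_zero.1 h3.symm).resolve_left hne
  have hψ00 : ψS 0 = 0 := by simpa using hψ0 0
  have hsym2 : rieszSymbolMulR (-α) (rieszFracDeriv α ⇑φ) = ⇑ψS := by
    rw [← hDcoe]
    funext ξ
    by_cases hξ : ξ = 0
    · rw [hξ]
      simp only [rieszSymbolMulR, if_pos rfl]
      exact hψ00.symm
    · simp only [rieszSymbolMulR, if_neg hξ]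
      have h5 : FourierTransform.fourier (⇑D) ξ = G ξ := by rw [hFD]
      rw [h5]
      have h6 : G ξ = rieszSymbolMulR α (⇑φ) ξ := by rw [hGcoe]
      rw [h6]
      simp only [rieszSymbolMulR, if_neg hξ]
      have h7 : ψS ξ = FourierTransform.fourier (⇑φ) ξ := by rw [hψcoe]
      rw [h7]
      have hb : ((|ξ| : ℝ) : ℂ) ≠ 0 := by
        exact_mod_cast abs_ne_zero.2 hξ
      have hb2 : ((|ξ| : ℝ) : ℂ) ^ α ≠ 0 := by
        rw [Complex.cpow_def_of_ne_zero hb]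
        exact Complex.exp_ne_zero _
      rw [Complex.cpow_neg, inv_mul_cancel_left₀ hb2]
  have hpart4 : rieszFracDeriv (-α) (rieszFracDeriv α ⇑φ) = ⇑φ := by
    show FourierTransformInv.fourierInv (rieszSymbolMulR (-α) (rieszFracDeriv α ⇑φ)) = ⇑φ
    rw [hsym2]
    have h8 : ⇑((FourierTransform.fourierCLE ℂ (SchwartzMap ℝ ℂ)).symm ψS) = FourierTransformInv.fourierInv ⇑ψS := by
      rw [FourierTransform.fourierCLE_symm_apply, SchwartzMap.fourierInv_coe]
    rw [← h8, hψS, (FourierTransform.fourierCLE ℂ (SchwartzMap ℝ ℂ)).symm_apply_apply]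
  exact ⟨⟨G, hGcoe⟩, hpart2, ⟨D, hDcoe, hDmom⟩, hpart4⟩

end
end

section
/- Let p be a prime, α ∈ ℂ, and let φ : ℚ_p → ℂ be locally constant with compact support and ∫_{ℚ_p} φ dμ_p = 0 (i.e. φ belongs to the p-adic Lizorkin space Φ(ℚ_p)). Define g : ℚ_p → ℂ by g(ξ) = |ξ|_p^α · 𝓕_pφ(ξ) for ξ ≠ 0 (where t^α = exp(α log t) for t > 0) and g(0) = 0. Then g is locally constant with compact support and vanishes on a neighbourhood of 0; consequently D^αφ := 𝓕_p^{−1}g is again locally constant with compact support and satisfies ∫_{ℚ_p} D^αφ dμ_p = 0, and moreover D^{−α}(D^αφ) = φ. In particular the Lizorkin space Φ(ℚ_p) is invariant under the fractional operator D^α and D^α(Φ(ℚ_p)) = Φ(ℚ_p). -/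
set_option maxHeartbeats 1000000


open MeasureTheory Complex
open scoped Classical

noncomputable section

variable (p : ℕ) [Fact p.Prime]

/-- Multiplication of the Fourier transform by the symbol `|ξ|_p^α` (set to `0` at `ξ = 0`). -/
def rieszSymbolMul (μ : MeasureTheory.Measure ℚ_[p]) (α : ℂ) (φ : ℚ_[p] → ℂ) :
    ℚ_[p] → ℂ :=
  fun ξ => if ξ = 0 then 0 else ((‖ξ‖ : ℂ) ^ α) * padicFourier p μ φ ξ

/-- The `p`-adic fractional operator `D^α φ = 𝓕_p⁻¹[|ξ|_p^α 𝓕_pφ]`. -/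
def padicFracDeriv (μ : MeasureTheory.Measure ℚ_[p]) (α : ℂ) (φ : ℚ_[p] → ℂ) :
    ℚ_[p] → ℂ :=
  padicFourierInv p μ (rieszSymbolMul p μ α φ)

namespace AuxPadic

open scoped ENNReal

variable {p}

lemma hp1 : (1:ℝ) < (p:ℝ) := by exact_mod_cast (Fact.out : p.Prime).one_lt

lemma hp0 : (0:ℝ) < (p:ℝ) := lt_trans one_pos hp1

/-- a rational of the form m/p^k with p-adic norm ≤ 1 is an integer -/
lemma rat_int_of_norm_le {r : ℚ} (hs : ∃ (m : ℤ) (k : ℕ), r = m / p ^ k)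
    (hn : ‖(r : ℚ_[p])‖ ≤ 1) : ∃ z : ℤ, r = z := by
  obtain ⟨m, k, rfl⟩ := hs
  have hpQ : (0:ℚ) < p := by exact_mod_cast (Fact.out : p.Prime).pos
  have hpk : ((p:ℚ) ^ k) ≠ 0 := by positivity
  have h1 : ((m : ℚ_[p]) / (p:ℚ_[p]) ^ k) = ((m / p ^ k : ℚ) : ℚ_[p]) := by push_cast; ring
  have h2 : ‖(m : ℚ_[p])‖ ≤ (p:ℝ) ^ (-(k:ℤ)) := by
    have hnp : ‖((m / p ^ k : ℚ) : ℚ_[p])‖ * ‖((p:ℚ_[p]))^k‖ ≤ 1 * ‖((p:ℚ_[p]))^k‖ := by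
      apply mul_le_mul_of_nonneg_right hn (norm_nonneg _)
    rw [← norm_mul] at hnp
    have : ((m / p ^ k : ℚ) : ℚ_[p]) * (p:ℚ_[p])^k = (m:ℚ_[p]) := by
      push_cast
      exact div_mul_cancel₀ _ (pow_ne_zero _ (by exact_mod_cast (Fact.out : p.Prime).ne_zero))
    rw [this, one_mul, Padic.norm_p_pow] at hnp
    exact hnp
  obtain ⟨c, hc⟩ := (Padic.norm_int_le_pow_iff_dvd m k).mp h2
  refine ⟨c, ?_⟩
  rw [hc]
  push_cast
  field_simp

lemma padicFract_spec (x : ℚ_[p]) :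
    (0 ≤ padicFract p x ∧ padicFract p x < 1 ∧
      ∃ (m : ℤ) (k : ℕ), padicFract p x = m / p ^ k) ∧
    ‖x - (padicFract p x : ℚ_[p])‖ ≤ 1 := by
  have hex : ∃ r : ℚ, (0 ≤ r ∧ r < 1 ∧ ∃ (m : ℤ) (n : ℕ), r = m / p ^ n) ∧
      ‖x - (r : ℚ_[p])‖ ≤ 1 := by
    obtain ⟨k, hk⟩ : ∃ k : ℕ, ‖x‖ ≤ (p:ℝ)^k := by
      obtain ⟨k, hk⟩ := pow_unbounded_of_one_lt ‖x‖ (hp1 (p:=p))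
      exact ⟨k, hk.le⟩
    have hy : ‖x * (p:ℚ_[p]) ^ k‖ ≤ 1 := by
      rw [norm_mul, Padic.norm_p_pow]
      calc ‖x‖ * (p:ℝ) ^ (-(k:ℤ)) ≤ (p:ℝ)^k * (p:ℝ)^(-(k:ℤ)) := by
            apply mul_le_mul_of_nonneg_right hk (zpow_nonneg hp0.le _)
        _ = 1 := by
            rw [← zpow_natCast (p:ℝ) k, ← zpow_add₀ (ne_of_gt hp0)]
            simp
    set z : ℤ_[p] := ⟨x * (p:ℚ_[p]) ^ k, hy⟩ with hz
    set j : ℕ := z.appr k with hj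
    refine ⟨(j : ℚ) / p ^ k, ⟨by positivity, ?_, ⟨(j:ℤ), k, by push_cast; ring⟩⟩, ?_⟩
    · have hpQ : (0:ℚ) < p := by exact_mod_cast (Fact.out : p.Prime).pos
      rw [div_lt_one (by positivity)]
      exact_mod_cast z.appr_lt k
    · have hspec := PadicInt.appr_spec k z
      rw [← PadicInt.norm_le_pow_iff_mem_span_pow] at hspec
      have hnorm : ‖x - (((j:ℚ) / p ^ k : ℚ) : ℚ_[p])‖
          = ‖((z : ℚ_[p]) - (j : ℚ_[p])) * ((p:ℚ_[p])^k)⁻¹‖ := by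
        congr 1
        have hpk : ((p:ℚ_[p]) ^ k) ≠ 0 := by
          apply pow_ne_zero
          exact_mod_cast (Fact.out : p.Prime).ne_zero
        field_simp [hz]
        push_cast; rw [sub_mul, div_mul_cancel₀ _ hpk]
      rw [hnorm, norm_mul, norm_inv, Padic.norm_p_pow]
      have h1 : ‖(z : ℚ_[p]) - (j:ℚ_[p])‖ ≤ (p:ℝ)^(-(k:ℤ)) := by
        have : ((z - (j:ℤ_[p]) : ℤ_[p]) : ℚ_[p]) = (z : ℚ_[p]) - (j:ℚ_[p]) := by push_cast; ring
        rw [← this]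
        exact_mod_cast hspec
      calc ‖(z : ℚ_[p]) - (j:ℚ_[p])‖ * ((p:ℝ)^(-(k:ℤ)))⁻¹
          ≤ (p:ℝ)^(-(k:ℤ)) * ((p:ℝ)^(-(k:ℤ)))⁻¹ := by
            exact mul_le_mul_of_nonneg_right h1 (inv_nonneg.mpr (zpow_nonneg (by positivity) _))
        _ = 1 := by
            rw [mul_inv_cancel₀]
            exact zpow_ne_zero _ (by exact_mod_cast (Fact.out : p.Prime).pos.ne')
  rw [padicFract, dif_pos hex]
  obtain ⟨⟨h0, h1, hs⟩, hn⟩ := hex.choose_spec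
  exact ⟨⟨h0, h1, hs⟩, hn⟩

lemma padicFract_unique {x : ℚ_[p]} {r : ℚ} (h0 : 0 ≤ r) (h1 : r < 1)
    (hs : ∃ (m : ℤ) (k : ℕ), r = m / p ^ k) (hn : ‖x - (r : ℚ_[p])‖ ≤ 1) :
    padicFract p x = r := by
  obtain ⟨⟨f0, f1, fs⟩, fn⟩ := padicFract_spec (p := p) x
  set f := padicFract p x
  have hd : ∃ z : ℤ, f - r = z := by
    apply rat_int_of_norm_le (p := p)
    · obtain ⟨m, k, hm⟩ := fs
      obtain ⟨m', k', hm'⟩ := hs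
      refine ⟨m * p ^ k' - m' * p ^ k, k + k', ?_⟩
      rw [hm, hm']
      have hpQ : (0:ℚ) < p := by exact_mod_cast (Fact.out : p.Prime).pos
      have h1 : ((p:ℚ))^k ≠ 0 := by positivity
      have h2 : ((p:ℚ))^k' ≠ 0 := by positivity
      field_simp
      push_cast
      ring
    · have : ((f - r : ℚ) : ℚ_[p]) = (x - (r:ℚ_[p])) - (x - (f:ℚ_[p])) := by
        push_cast; ring
      rw [this]
      calc ‖(x - (r:ℚ_[p])) - (x - (f:ℚ_[p]))‖
          = ‖(x - (r:ℚ_[p])) + (-(x - (f:ℚ_[p])))‖ := by rw [sub_eq_add_neg]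
        _ ≤ max ‖x - (r:ℚ_[p])‖ ‖-(x - (f:ℚ_[p]))‖ := Padic.nonarchimedean _ _
        _ ≤ 1 := by rw [norm_neg]; exact max_le hn fn
  obtain ⟨z, hz⟩ := hd
  have hz1 : (z:ℚ) < 1 := by rw [← hz]; linarith
  have hz2 : (-1:ℚ) < (z:ℚ) := by rw [← hz]; linarith
  have hz0 : z = 0 := by
    have w1 : z < 1 := by exact_mod_cast hz1
    have w2 : -1 < z := by exact_mod_cast hz2
    omega
  rw [hz0] at hz
  have : f - r = 0 := by exact_mod_cast hz
  linarith


lemma padicFract_eq_zero {x : ℚ_[p]} (h : ‖x‖ ≤ 1) : padicFract p x = 0 := by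
  apply padicFract_unique le_rfl one_pos ⟨0, 0, by norm_num⟩
  simpa using h

lemma char_eq_one {x : ℚ_[p]} (h : ‖x‖ ≤ 1) : padicChar p x = 1 := by
  rw [padicChar, padicFract_eq_zero h]
  simp

@[simp] lemma char_zero' : padicChar p (0 : ℚ_[p]) = 1 :=
  char_eq_one (by simp)

lemma char_add (x y : ℚ_[p]) : padicChar p (x + y) = padicChar p x * padicChar p y := by
  obtain ⟨⟨f0x, f1x, fsx⟩, fnx⟩ := padicFract_spec (p := p) x
  obtain ⟨⟨f0y, f1y, fsy⟩, fny⟩ := padicFract_spec (p := p) y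
  obtain ⟨⟨f0s, f1s, fss⟩, fns⟩ := padicFract_spec (p := p) (x + y)
  have hd : ∃ z : ℤ, padicFract p x + padicFract p y - padicFract p (x + y) = z := by
    apply rat_int_of_norm_le (p := p)
    · obtain ⟨m, k, hm⟩ := fsx
      obtain ⟨m', k', hm'⟩ := fsy
      obtain ⟨m'', k'', hm''⟩ := fss
      refine ⟨m * p ^ (k' + k'') + m' * p ^ (k + k'') - m'' * p ^ (k + k'), k + k' + k'', ?_⟩
      rw [hm, hm', hm'']
      have hpQ : (0:ℚ) < p := by exact_mod_cast (Fact.out : p.Prime).pos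
      have h1 : ((p:ℚ))^k ≠ 0 := by positivity
      have h2 : ((p:ℚ))^k' ≠ 0 := by positivity
      have h3 : ((p:ℚ))^k'' ≠ 0 := by positivity
      field_simp
      push_cast
      ring
    · have hrw : ((padicFract p x + padicFract p y - padicFract p (x + y) : ℚ) : ℚ_[p])
          = ((x + y) - (padicFract p (x+y) : ℚ_[p]))
            + (-((x - (padicFract p x : ℚ_[p])) + (y - (padicFract p y : ℚ_[p])))) := by
        push_cast; ring
      rw [hrw]
      refine le_trans (Padic.nonarchimedean _ _) (max_le fns ?_)
      rw [norm_neg]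
      exact le_trans (Padic.nonarchimedean _ _) (max_le fnx fny)
  obtain ⟨z, hz⟩ := hd
  have : (padicFract p (x+y) : ℂ) = (padicFract p x : ℂ) + (padicFract p y : ℂ) - (z:ℂ) := by
    have : (padicFract p (x+y) : ℚ) = padicFract p x + padicFract p y - (z:ℚ) := by linarith
    exact_mod_cast congrArg (fun t : ℚ => (t : ℂ)) this
  rw [padicChar, padicChar, padicChar, this]
  rw [show 2 * (Real.pi:ℂ) * Complex.I * ((padicFract p x : ℂ) + (padicFract p y : ℂ) - (z:ℂ))
      = (2 * (Real.pi:ℂ) * Complex.I * (padicFract p x : ℂ)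
        + 2 * (Real.pi:ℂ) * Complex.I * (padicFract p y : ℂ))
        + -(z * (2 * (Real.pi:ℂ) * Complex.I)) by ring]
  rw [Complex.exp_add, Complex.exp_add, Complex.exp_neg, Complex.exp_int_mul_two_pi_mul_I]
  simp

lemma char_norm_one (x : ℚ_[p]) : ‖padicChar p x‖ = 1 := by
  rw [padicChar]
  rw [show 2 * (Real.pi:ℂ) * Complex.I * (padicFract p x : ℂ)
      = ((2 * Real.pi * (padicFract p x : ℝ) : ℝ) : ℂ) * Complex.I by push_cast; ring]
  exact Complex.norm_exp_ofReal_mul_I _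

lemma char_ne_one_of_fract_pos {x : ℚ_[p]} (h0 : 0 < padicFract p x) :
    padicChar p x ≠ 1 := by
  have h1 : padicFract p x < 1 := (padicFract_spec (p := p) x).1.2.1
  rw [padicChar]
  intro hc
  rw [Complex.exp_eq_one_iff] at hc
  obtain ⟨n, hn⟩ := hc
  have hI : (Complex.I : ℂ) ≠ 0 := Complex.I_ne_zero
  have hpi : (Real.pi : ℂ) ≠ 0 := by exact_mod_cast Real.pi_ne_zero
  have h2 : (2 * (Real.pi:ℂ) * Complex.I) * (padicFract p x : ℂ)
      = (2 * (Real.pi:ℂ) * Complex.I) * (n : ℂ) := by rw [hn]; ring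
  have hne : (2 * (Real.pi:ℂ) * Complex.I) ≠ 0 := by
    simp [Real.pi_ne_zero, Complex.I_ne_zero]
  have : (padicFract p x : ℂ) = (n : ℂ) := mul_left_cancel₀ hne h2
  have : (padicFract p x : ℚ) = (n : ℚ) := by exact_mod_cast this
  rw [this] at h0 h1
  have : (0:ℤ) < n := by exact_mod_cast h0
  have : n < 1 := by exact_mod_cast h1
  omega

lemma char_p_inv_ne_one : padicChar p ((p:ℚ_[p])⁻¹) ≠ 1 := by
  apply char_ne_one_of_fract_pos
  have : padicFract p ((p:ℚ_[p])⁻¹) = 1 / p := by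
    apply padicFract_unique
    · positivity
    · rw [div_lt_one (by exact_mod_cast (Fact.out : p.Prime).pos)]
      exact_mod_cast (Fact.out : p.Prime).one_lt
    · exact ⟨1, 1, by norm_num⟩
    · have : ((1 / p : ℚ) : ℚ_[p]) = (p:ℚ_[p])⁻¹ := by push_cast; ring
      rw [this]
      simp
  rw [this]
  have hpQ : (0:ℚ) < p := by exact_mod_cast (Fact.out : p.Prime).pos
  positivity

/-! ### Balls -/

variable (p) in
def pball (c : ℚ_[p]) (n : ℤ) : Set ℚ_[p] := {x | ‖x - c‖ ≤ (p:ℝ)^n}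

variable (p) in
def bInd (c : ℚ_[p]) (n : ℤ) (x : ℚ_[p]) : ℂ := if ‖x - c‖ ≤ (p:ℝ)^n then 1 else 0

lemma pball_eq (c : ℚ_[p]) (n : ℤ) : pball p c n = Metric.closedBall c ((p:ℝ)^n) := by
  ext x
  simp [pball, Metric.mem_closedBall, dist_eq_norm]

lemma isCompact_pball (c : ℚ_[p]) (n : ℤ) : IsCompact (pball p c n) := by
  rw [pball_eq]; exact isCompact_closedBall _ _

lemma measurableSet_pball (c : ℚ_[p]) (n : ℤ) : MeasurableSet (pball p c n) := by
  rw [pball_eq]; exact Metric.isClosed_closedBall.measurableSet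

lemma mem_pball_zero {x : ℚ_[p]} {n : ℤ} : x ∈ pball p 0 n ↔ ‖x‖ ≤ (p:ℝ)^n := by
  simp [pball]

lemma bInd_eq_indicator (c : ℚ_[p]) (n : ℤ) (f : ℚ_[p] → ℂ) :
    (fun x => f x * bInd p c n x) = (pball p c n).indicator f := by
  ext x
  by_cases h : ‖x - c‖ ≤ (p:ℝ)^n
  · rw [Set.indicator_of_mem (show x ∈ pball p c n from h), bInd, if_pos h, mul_one]
  · rw [Set.indicator_of_notMem (show x ∉ pball p c n from h), bInd, if_neg h, mul_zero]

/-- discreteness of the p-adic norm -/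
lemma norm_le_pow_of_lt_pow {x : ℚ_[p]} {n : ℤ} (h : ‖x‖ < (p:ℝ)^(n+1)) :
    ‖x‖ ≤ (p:ℝ)^n := by
  rcases eq_or_ne x 0 with rfl | hx
  · simp [zpow_nonneg (hp0 (p:=p)).le]
  · rw [Padic.norm_eq_zpow_neg_valuation hx] at h ⊢
    have := (zpow_lt_zpow_iff_right₀ (hp1 (p:=p))).mp h
    exact zpow_le_zpow_right₀ (hp1 (p:=p)).le (by omega)

lemma pow_succ_le_norm {x : ℚ_[p]} {n : ℤ} (h : (p:ℝ)^n < ‖x‖) :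
    (p:ℝ)^(n+1) ≤ ‖x‖ := by
  by_contra hc
  exact absurd (norm_le_pow_of_lt_pow (not_le.mp hc)) (not_le.mpr h)

lemma norm_eq_of_sub_lt {x y : ℚ_[p]} (h : ‖x - y‖ < ‖x‖) : ‖y‖ = ‖x‖ := by
  have h1 : ‖x‖ ≠ ‖-(x - y)‖ := by rw [norm_neg]; exact (ne_of_lt h).symm
  have h2 : y = x + -(x - y) := by ring
  rw [h2, Padic.add_eq_max_of_ne h1, norm_neg]
  exact max_eq_left h.le

/-! ### character lemmas -/

lemma char_mul_locConst (c : ℚ_[p]) : IsLocallyConstant (fun x : ℚ_[p] => padicChar p (x * c)) := by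
  rw [IsLocallyConstant.iff_exists_open]
  intro x
  rcases eq_or_ne c 0 with rfl | hc
  · exact ⟨Set.univ, isOpen_univ, trivial, fun y _ => by rw [mul_zero, mul_zero]⟩
  · refine ⟨Metric.ball x (‖c‖⁻¹), Metric.isOpen_ball,
      Metric.mem_ball_self (inv_pos.mpr (norm_pos_iff.mpr hc)), ?_⟩
    intro y hy
    rw [Metric.mem_ball, dist_eq_norm] at hy
    have hnorm : ‖(y - x) * c‖ ≤ 1 := by
      rw [norm_mul]
      calc ‖y - x‖ * ‖c‖ ≤ ‖c‖⁻¹ * ‖c‖ :=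
            mul_le_mul_of_nonneg_right hy.le (norm_nonneg _)
        _ = 1 := inv_mul_cancel₀ (norm_pos_iff.mpr hc).ne'
    have hsplit : y * c = x * c + (y - x) * c := by ring
    rw [hsplit, char_add, char_eq_one hnorm, mul_one]

lemma bInd_locConst (c : ℚ_[p]) (n : ℤ) : IsLocallyConstant (bInd p c n) := by
  rw [IsLocallyConstant.iff_exists_open]
  intro x
  refine ⟨Metric.ball x ((p:ℝ)^n), Metric.isOpen_ball, Metric.mem_ball_self (by
    have := hp0 (p:=p); positivity), ?_⟩
  intro y hy
  rw [Metric.mem_ball, dist_eq_norm] at hy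
  have key : ‖y - c‖ ≤ (p:ℝ)^n ↔ ‖x - c‖ ≤ (p:ℝ)^n := by
    constructor <;> intro h
    · have : x - c = (x - y) + (y - c) := by ring
      rw [this]
      refine le_trans (Padic.nonarchimedean _ _) (max_le ?_ h)
      rw [← norm_neg]; simpa using hy.le
    · have : y - c = (y - x) + (x - c) := by ring
      rw [this]
      exact le_trans (Padic.nonarchimedean _ _) (max_le hy.le h)
  simp only [bInd]
  rw [if_congr key rfl rfl]

/-! ### measure of balls -/

section Measure

variable {μ : MeasureTheory.Measure ℚ_[p]} [μ.IsAddHaarMeasure]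

lemma meas_pball_eq_zero_center (c : ℚ_[p]) (n : ℤ) : μ (pball p c n) = μ (pball p 0 n) := by
  have : pball p c n = (fun x => x + (-c)) ⁻¹' (pball p 0 n) := by
    ext x; simp [pball, sub_eq_add_neg]
  rw [this, measure_preimage_add_right]

lemma meas_pball_step (n : ℤ) : μ (pball p 0 (n+1)) = p * μ (pball p 0 n) := by
  classical
  have hpR := hp0 (p:=p)
  have hppos : (0:ℚ_[p]) ≠ (p:ℚ_[p]) := by
    exact_mod_cast (Nat.cast_ne_zero.mpr (Fact.out : p.Prime).ne_zero).symm
  set c : ℕ → ℚ_[p] := fun j => (j:ℚ_[p]) * (p:ℚ_[p])^(-(n+1)) with hc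
  have hdecomp : pball p 0 (n+1) = ⋃ j ∈ Finset.range p, pball p (c j) n := by
    ext x
    simp only [Set.mem_iUnion, Finset.mem_range, pball, Set.mem_setOf_eq, sub_zero]
    constructor
    · intro hx
      have ht : ‖x * (p:ℚ_[p])^(n+1)‖ ≤ 1 := by
        rw [norm_mul, Padic.norm_p_zpow]
        calc ‖x‖ * (p:ℝ)^(-(n+1)) ≤ (p:ℝ)^(n+1) * (p:ℝ)^(-(n+1)) := by
              apply mul_le_mul_of_nonneg_right hx (zpow_nonneg hpR.le _)
          _ = (p:ℝ)^((n+1) + (-(n+1))) := (zpow_add₀ (ne_of_gt hpR) _ _).symm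
          _ = 1 := by rw [add_neg_cancel, zpow_zero]
      set t : ℤ_[p] := ⟨x * (p:ℚ_[p])^(n+1), ht⟩ with htt
      refine ⟨t.appr 1, by simpa using t.appr_lt 1, ?_⟩
      have hspec := PadicInt.appr_spec 1 t
      rw [← PadicInt.norm_le_pow_iff_mem_span_pow] at hspec
      have hx2 : x - c (t.appr 1) = ((t:ℚ_[p]) - ((t.appr 1 : ℕ) : ℚ_[p])) * (p:ℚ_[p])^(-(n+1)) := by
        rw [hc]
        have hh : (t:ℚ_[p]) = x * (p:ℚ_[p])^(n+1) := rfl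
        rw [hh, sub_mul, mul_assoc, ← zpow_add₀ (Ne.symm hppos), add_neg_cancel, zpow_zero,
          mul_one]
      rw [hx2, norm_mul, Padic.norm_p_zpow]
      have h1 : ‖(t:ℚ_[p]) - ((t.appr 1 : ℕ) : ℚ_[p])‖ ≤ (p:ℝ)^(-(1:ℤ)) := by
        have hcast : ((t - ((t.appr 1 : ℕ) : ℤ_[p]) : ℤ_[p]) : ℚ_[p])
            = (t:ℚ_[p]) - ((t.appr 1 : ℕ) : ℚ_[p]) := by push_cast; ring
        rw [← hcast]
        exact_mod_cast hspec
      calc ‖(t:ℚ_[p]) - ((t.appr 1 : ℕ) : ℚ_[p])‖ * (p:ℝ)^(-(-(n+1)))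
          ≤ (p:ℝ)^(-(1:ℤ)) * (p:ℝ)^(n+1) := by
            rw [neg_neg]
            exact mul_le_mul_of_nonneg_right h1 (zpow_nonneg hpR.le _)
        _ = (p:ℝ)^n := by rw [← zpow_add₀ (ne_of_gt hpR)]; congr 1; ring
    · rintro ⟨j, hj, hxj⟩
      have hcj : ‖c j‖ ≤ (p:ℝ)^(n+1) := by
        rw [hc, norm_mul, Padic.norm_p_zpow, neg_neg]
        calc ‖(j:ℚ_[p])‖ * (p:ℝ)^(n+1) ≤ 1 * (p:ℝ)^(n+1) := by
              apply mul_le_mul_of_nonneg_right _ (zpow_nonneg hpR.le _)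
              exact_mod_cast Padic.norm_int_le_one (p := p) (j:ℤ)
          _ = (p:ℝ)^(n+1) := one_mul _
      have : x = (x - c j) + c j := by ring
      rw [this]
      refine le_trans (Padic.nonarchimedean _ _) (max_le ?_ hcj)
      exact le_trans hxj (zpow_le_zpow_right₀ (hp1 (p:=p)).le (by omega))
  have hdisj : (↑(Finset.range p) : Set ℕ).PairwiseDisjoint (fun j => pball p (c j) n) := by
    intro i hi j hj hij
    simp only [Finset.coe_range, Set.mem_Iio] at hi hj
    rw [Function.onFun, Set.disjoint_left]
    intro x hxi hxj
    apply hij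
    have hsub : ‖c i - c j‖ ≤ (p:ℝ)^n := by
      have : c i - c j = (c i - x) + (x - c j) := by ring
      rw [this]
      refine le_trans (Padic.nonarchimedean _ _) (max_le ?_ hxj)
      rw [← norm_neg]; simpa [pball] using hxi
    have : c i - c j = (((i:ℤ) - (j:ℤ) : ℤ) : ℚ_[p]) * (p:ℚ_[p])^(-(n+1)) := by
      rw [hc]; push_cast; ring
    rw [this, norm_mul, Padic.norm_p_zpow, neg_neg] at hsub
    have hnormij : ‖(((i:ℤ) - (j:ℤ) : ℤ) : ℚ_[p])‖ ≤ (p:ℝ)^(-(1:ℤ)) := by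
      have hpow : (0:ℝ) < (p:ℝ)^(n+1) := zpow_pos hpR _
      rw [← mul_le_mul_iff_of_pos_right hpow]
      calc ‖(((i:ℤ) - (j:ℤ) : ℤ) : ℚ_[p])‖ * (p:ℝ)^(n+1) ≤ (p:ℝ)^n := hsub
        _ = (p:ℝ)^(-(1:ℤ)) * (p:ℝ)^(n+1) := by rw [← zpow_add₀ (ne_of_gt hpR)]; congr 1; ring
    have hdvd : ((p:ℤ)^1 : ℤ) ∣ ((i:ℤ) - (j:ℤ)) := by
      have := (Padic.norm_int_le_pow_iff_dvd (p := p) ((i:ℤ) - (j:ℤ)) 1).mp (by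
        simpa using hnormij)
      simpa using this
    rw [pow_one] at hdvd
    have hz : (i:ℤ) - (j:ℤ) = 0 := by
      apply Int.eq_zero_of_dvd_of_natAbs_lt_natAbs hdvd
      omega
    omega
  rw [hdecomp, measure_biUnion_finset hdisj (fun j _ => measurableSet_pball _ _)]
  have hsame : ∀ j ∈ Finset.range p, μ (pball p (c j) n) = μ (pball p 0 n) :=
    fun j _ => meas_pball_eq_zero_center _ _
  rw [Finset.sum_congr rfl hsame, Finset.sum_const, Finset.card_range, nsmul_eq_mul]

lemma meas_pball_zero (hμ : μ {x : ℚ_[p] | ‖x‖ ≤ 1} = 1) (n : ℤ) :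
    μ (pball p 0 n) = ENNReal.ofReal ((p:ℝ)^n) := by
  have hpR := hp0 (p:=p)
  have hpE : ((p:ℕ) : ℝ≥0∞) ≠ 0 := by exact_mod_cast (Fact.out : p.Prime).ne_zero
  have hpT : ((p:ℕ) : ℝ≥0∞) ≠ ⊤ := ENNReal.natCast_ne_top p
  have hbase : μ (pball p 0 0) = 1 := by
    have : pball p 0 (0:ℤ) = {x : ℚ_[p] | ‖x‖ ≤ 1} := by
      ext x; simp [pball]
    rw [this, hμ]
  induction n using Int.induction_on with
  | zero => rw [hbase]; simp
  | succ k ih =>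
      rw [meas_pball_step, ih, ← ENNReal.ofReal_natCast, ← ENNReal.ofReal_mul (by positivity)]
      congr 1
      rw [zpow_add₀ (ne_of_gt hpR), zpow_one]
      ring
  | pred k ih =>
      have hstep := meas_pball_step (μ := μ) (-(k:ℤ) - 1)
      have hrw : (-(k:ℤ) - 1) + 1 = -(k:ℤ) := by ring
      rw [hrw, ih] at hstep
      have : ENNReal.ofReal ((p:ℝ)^(-(k:ℤ)))
          = (p:ℝ≥0∞) * ENNReal.ofReal ((p:ℝ)^(-(k:ℤ)-1)) := by
        rw [← ENNReal.ofReal_natCast, ← ENNReal.ofReal_mul (by positivity)]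
        congr 1
        have he : (-(k:ℤ)) = 1 + (-(k:ℤ)-1) := by ring
        calc (p:ℝ)^(-(k:ℤ)) = (p:ℝ)^(1 + (-(k:ℤ)-1)) := by rw [← he]
          _ = (p:ℝ) * (p:ℝ)^(-(k:ℤ)-1) := by rw [zpow_add₀ (ne_of_gt hpR), zpow_one]
      rw [this] at hstep
      exact ((ENNReal.mul_right_inj hpE hpT).mp hstep).symm

lemma meas_pball (hμ : μ {x : ℚ_[p] | ‖x‖ ≤ 1} = 1) (c : ℚ_[p]) (n : ℤ) :
    μ (pball p c n) = ENNReal.ofReal ((p:ℝ)^n) := by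
  rw [meas_pball_eq_zero_center, meas_pball_zero hμ]

lemma meas_pball_toReal (hμ : μ {x : ℚ_[p] | ‖x‖ ≤ 1} = 1) (c : ℚ_[p]) (n : ℤ) :
    (μ (pball p c n)).toReal = (p:ℝ)^n := by
  rw [meas_pball hμ, ENNReal.toReal_ofReal (zpow_nonneg (hp0 (p:=p)).le _)]

lemma bInd_add_eq {a : ℚ_[p]} {n : ℤ} (ha : ‖a‖ ≤ (p:ℝ)^n) (c x : ℚ_[p]) :
    bInd p c n (x + a) = bInd p c n x := by
  have key : ‖x + a - c‖ ≤ (p:ℝ)^n ↔ ‖x - c‖ ≤ (p:ℝ)^n := by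
    constructor <;> intro h
    · have hrw : x - c = (x + a - c) + (-a) := by ring
      rw [hrw]
      exact le_trans (Padic.nonarchimedean _ _) (max_le h (by simpa using ha))
    · have hrw : x + a - c = (x - c) + a := by ring
      rw [hrw]
      exact le_trans (Padic.nonarchimedean _ _) (max_le h ha)
  simp only [bInd]
  rw [if_congr key rfl rfl]

lemma continuous_char_mul (w : ℚ_[p]) : Continuous (fun x : ℚ_[p] => padicChar p (w * x)) := by
  have : (fun x : ℚ_[p] => padicChar p (w * x)) = fun x : ℚ_[p] => padicChar p (x * w) := by
    funext x; rw [mul_comm]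
  rw [this]
  exact (char_mul_locConst w).continuous

lemma integrable_char_bInd (w c : ℚ_[p]) (n : ℤ) :
    MeasureTheory.Integrable (fun x => padicChar p (w * x) * bInd p c n x) μ := by
  rw [bInd_eq_indicator]
  apply MeasureTheory.IntegrableOn.integrable_indicator _ (measurableSet_pball c n)
  exact ContinuousOn.integrableOn_compact (isCompact_pball c n)
    (continuous_char_mul w).continuousOn

lemma integral_char_bInd_zero (hμ : μ {x : ℚ_[p] | ‖x‖ ≤ 1} = 1) (w : ℚ_[p]) (n : ℤ) :
    ∫ x, padicChar p (w * x) * bInd p 0 n x ∂μ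
      = if ‖w‖ ≤ (p:ℝ)^(-n) then ((((p:ℝ)^n : ℝ) : ℂ)) else 0 := by
  have hpR := hp0 (p:=p)
  by_cases hw : ‖w‖ ≤ (p:ℝ)^(-n)
  · rw [if_pos hw]
    have heq : ∀ x, padicChar p (w * x) * bInd p 0 n x = bInd p 0 n x := by
      intro x
      by_cases hx : ‖x - 0‖ ≤ (p:ℝ)^n
      · rw [char_eq_one, bInd, if_pos hx, one_mul]
        rw [norm_mul]
        rw [sub_zero] at hx
        calc ‖w‖ * ‖x‖ ≤ (p:ℝ)^(-n) * (p:ℝ)^n := by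
              apply mul_le_mul hw hx (norm_nonneg x) (zpow_nonneg hpR.le _)
          _ = (p:ℝ)^((-n) + n) := (zpow_add₀ (ne_of_gt hpR) _ _).symm
          _ = 1 := by rw [neg_add_cancel, zpow_zero]
      · rw [bInd, if_neg hx, mul_zero]
    simp only [heq]
    have hind : (fun x => bInd p 0 n x) = (pball p 0 n).indicator (fun _ => (1:ℂ)) := by
      have := bInd_eq_indicator (p := p) 0 n (fun _ => (1:ℂ))
      simpa [one_mul] using this
    rw [hind, MeasureTheory.integral_indicator_const _ (measurableSet_pball _ _),
      MeasureTheory.measureReal_def, meas_pball_toReal hμ]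
    simp
  · rw [if_neg hw]
    have hw0 : w ≠ 0 := by
      intro h
      apply hw
      rw [h, norm_zero]
      exact zpow_nonneg hpR.le _
    have hppQ : ((p:ℚ_[p])) ≠ 0 := by
      exact_mod_cast Nat.cast_ne_zero.mpr (Fact.out : p.Prime).ne_zero
    set a := w⁻¹ * ((p:ℚ_[p]))⁻¹ with hadef
    have hwa : w * a = (p:ℚ_[p])⁻¹ := by
      rw [hadef, ← mul_assoc, mul_inv_cancel₀ hw0, one_mul]
    have hna : ‖a‖ ≤ (p:ℝ)^n := by
      have hlb : (p:ℝ)^(-n+1) ≤ ‖w‖ := pow_succ_le_norm (not_le.mp hw)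
      rw [hadef, norm_mul, norm_inv, norm_inv, Padic.norm_p]
      rw [inv_inv]
      have hwpos : (0:ℝ) < ‖w‖ := norm_pos_iff.mpr hw0
      have key : (p:ℝ) ≤ (p:ℝ)^n * ‖w‖ := by
        calc (p:ℝ) = (p:ℝ)^((-n+1) + n) := by
              rw [show (-n+1) + n = 1 by ring, zpow_one]
          _ = (p:ℝ)^(-n+1) * (p:ℝ)^n := zpow_add₀ (ne_of_gt hpR) _ _
          _ ≤ ‖w‖ * (p:ℝ)^n := mul_le_mul_of_nonneg_right hlb (zpow_nonneg hpR.le _)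
          _ = (p:ℝ)^n * ‖w‖ := mul_comm _ _
      calc ‖w‖⁻¹ * (p:ℝ) ≤ ‖w‖⁻¹ * ((p:ℝ)^n * ‖w‖) :=
            mul_le_mul_of_nonneg_left key (inv_nonneg.mpr hwpos.le)
        _ = (p:ℝ)^n := by field_simp
    set I := ∫ x, padicChar p (w * x) * bInd p 0 n x ∂μ with hI
    have hshift : ∫ x, padicChar p (w * (x + a)) * bInd p 0 n (x + a) ∂μ = I :=
      MeasureTheory.integral_add_right_eq_self (μ := μ)
        (fun x => padicChar p (w * x) * bInd p 0 n x) a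
    have hfe : ∀ x, padicChar p (w * (x + a)) * bInd p 0 n (x + a)
        = padicChar p ((p:ℚ_[p])⁻¹) * (padicChar p (w * x) * bInd p 0 n x) := by
      intro x
      rw [show w * (x + a) = w * x + w * a by ring, char_add, hwa, bInd_add_eq hna]
      ring
    rw [show (∫ x, padicChar p (w * (x + a)) * bInd p 0 n (x + a) ∂μ)
        = ∫ x, padicChar p ((p:ℚ_[p])⁻¹) * (padicChar p (w * x) * bInd p 0 n x) ∂μ from by
      simp only [hfe]] at hshift
    rw [MeasureTheory.integral_const_mul, ← hI] at hshift
    have : (padicChar p ((p:ℚ_[p])⁻¹) - 1) * I = 0 := by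
      rw [sub_mul, one_mul, hshift, sub_self]
    rcases mul_eq_zero.mp this with h | h
    · exact absurd (sub_eq_zero.mp h) char_p_inv_ne_one
    · exact h

lemma integral_char_bInd (hμ : μ {x : ℚ_[p] | ‖x‖ ≤ 1} = 1) (w c : ℚ_[p]) (n : ℤ) :
    ∫ x, padicChar p (w * x) * bInd p c n x ∂μ
      = padicChar p (w * c) * ((((p:ℝ)^n : ℝ) : ℂ))
          * (if ‖w‖ ≤ (p:ℝ)^(-n) then 1 else 0) := by
  have hshift := MeasureTheory.integral_add_right_eq_self (μ := μ)
    (fun x => padicChar p (w * x) * bInd p c n x) c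
  rw [← hshift]
  have hfe : ∀ x, padicChar p (w * (x + c)) * bInd p c n (x + c)
      = padicChar p (w * c) * (padicChar p (w * x) * bInd p 0 n x) := by
    intro x
    have h1 : bInd p c n (x + c) = bInd p 0 n x := by
      simp only [bInd, add_sub_cancel_right, sub_zero]
    rw [show w * (x + c) = w * x + w * c by ring, char_add, h1]
    ring
  simp only [hfe]
  rw [MeasureTheory.integral_const_mul, integral_char_bInd_zero hμ]
  by_cases h : ‖w‖ ≤ (p:ℝ)^(-n) <;> simp [h]

end Measure

variable (p) in
def IsStep (f : ℚ_[p] → ℂ) : Prop :=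
  ∃ (n : ℤ) (s : Finset ℚ_[p]) (coef : ℚ_[p] → ℂ),
    ∀ x, f x = ∑ c ∈ s, coef c * bInd p c n x

lemma exists_supp_bound {f : ℚ_[p] → ℂ} (hcs : HasCompactSupport f) :
    ∃ m : ℕ, ∀ x : ℚ_[p], (p:ℝ)^(m:ℤ) < ‖x‖ → f x = 0 := by
  obtain ⟨R, hR⟩ := hcs.isBounded.subset_closedBall 0
  obtain ⟨m, hm⟩ := pow_unbounded_of_one_lt R (hp1 (p:=p))
  refine ⟨m, fun x hx => ?_⟩
  apply image_eq_zero_of_notMem_tsupport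
  intro hmem
  have := hR hmem
  rw [Metric.mem_closedBall, dist_zero_right] at this
  rw [zpow_natCast] at hx
  linarith
 
lemma unif_const {f : ℚ_[p] → ℂ} (hlc : IsLocallyConstant f)
    (m : ℕ) (hsupp : ∀ x : ℚ_[p], (p:ℝ)^(m:ℤ) < ‖x‖ → f x = 0) :
    ∃ N : ℕ, ∀ x y : ℚ_[p], ‖x - y‖ ≤ (p:ℝ)^(-(N:ℤ)) → f x = f y := by
  classical
  have hpR := hp0 (p:=p)
  have hradius : ∀ x : ℚ_[p], ∃ k : ℕ,
      ∀ y ∈ Metric.ball x ((p:ℝ)^(-(k:ℤ))), f y = f x := by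
    intro x
    obtain ⟨U, hUopen, hxU, hUconst⟩ := hlc.exists_open x
    obtain ⟨ε, hε, hball⟩ := Metric.isOpen_iff.mp hUopen x hxU
    have h1p : (p:ℝ)⁻¹ < 1 := by
      rw [inv_lt_one_iff₀]; right; exact hp1 (p:=p)
    obtain ⟨k, hk⟩ := exists_pow_lt_of_lt_one hε h1p
    refine ⟨k, fun y hy => hUconst y (hball ?_)⟩
    apply lt_trans (lt_of_lt_of_le (Metric.mem_ball.mp hy) ?_) hk
    rw [zpow_neg, zpow_natCast, inv_pow]
  choose rad hrad using hradius
  have hcov : pball p 0 (m:ℤ) ⊆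
      ⋃ x ∈ pball p 0 (m:ℤ), Metric.ball x ((p:ℝ)^(-(rad x : ℤ))) := by
    intro x hx
    simp only [Set.mem_iUnion]
    exact ⟨x, hx, Metric.mem_ball_self (zpow_pos hpR _)⟩
  obtain ⟨t, htK, htcov⟩ := (isCompact_pball (p := p) 0 (m:ℤ)).elim_nhds_subcover
    (fun x => Metric.ball x ((p:ℝ)^(-(rad x : ℤ))))
    (fun x _ => Metric.ball_mem_nhds x (zpow_pos hpR _))
  set N : ℕ := (t.sup rad) + 1 with hN
  refine ⟨N, fun x y hxy => ?_⟩
  by_cases hx : x ∈ pball p 0 (m:ℤ)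
  · obtain ⟨z, hz, hxz⟩ := Set.mem_iUnion₂.mp (htcov hx)
    have hkz : (rad z : ℤ) + 1 ≤ (N:ℤ) := by
      have := Finset.le_sup (f := rad) hz
      omega
    have hyz : y ∈ Metric.ball z ((p:ℝ)^(-(rad z : ℤ))) := by
      rw [Metric.mem_ball, dist_eq_norm]
      have h1 : y - z = (y - x) + (x - z) := by ring
      rw [h1]
      apply lt_of_le_of_lt (Padic.nonarchimedean _ _)
      apply max_lt
      · apply lt_of_le_of_lt _ (zpow_lt_zpow_right₀ (hp1 (p:=p)) (show -(rad z:ℤ)-1 < -(rad z:ℤ) by omega))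
        calc ‖y - x‖ = ‖x - y‖ := by rw [← norm_neg]; congr 1; ring
          _ ≤ (p:ℝ)^(-(N:ℤ)) := hxy
          _ ≤ (p:ℝ)^(-(rad z:ℤ)-1) := zpow_le_zpow_right₀ (hp1 (p:=p)).le (by omega)
      · rw [← dist_eq_norm]
        exact Metric.mem_ball.mp hxz
    rw [hrad z x hxz, hrad z y hyz]
  · have hxnorm : (p:ℝ)^(m:ℤ) < ‖x‖ := not_le.mp (fun h => hx (mem_pball_zero.mpr h))
    have hynorm : (p:ℝ)^(m:ℤ) < ‖y‖ := by
      by_contra hy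
      apply not_le.mpr hxnorm
      have h1 : x = (x - y) + y := by ring
      rw [h1]
      apply le_trans (Padic.nonarchimedean _ _)
      apply max_le _ (not_lt.mp hy)
      calc ‖x - y‖ ≤ (p:ℝ)^(-(N:ℤ)) := hxy
        _ ≤ (p:ℝ)^(m:ℤ) := zpow_le_zpow_right₀ (hp1 (p:=p)).le (by omega)
    rw [hsupp x hxnorm, hsupp y hynorm]

lemma isStep_of {f : ℚ_[p] → ℂ} (hlc : IsLocallyConstant f) (hcs : HasCompactSupport f) :
    IsStep p f := by
  classical
  have hpR := hp0 (p:=p)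
  have hppQ : ((p:ℚ_[p])) ≠ 0 := by
    exact_mod_cast Nat.cast_ne_zero.mpr (Fact.out : p.Prime).ne_zero
  obtain ⟨m, hm⟩ := exists_supp_bound hcs
  obtain ⟨N, hN⟩ := unif_const hlc m hm
  set ctr : ℕ → ℚ_[p] := fun j => (j:ℚ_[p]) * (p:ℚ_[p])^(-(m:ℤ)) with hctr
  have hctr_norm : ∀ j : ℕ, ‖ctr j‖ ≤ (p:ℝ)^(m:ℤ) := by
    intro j
    rw [hctr, norm_mul, Padic.norm_p_zpow, neg_neg]
    calc ‖(j:ℚ_[p])‖ * (p:ℝ)^(m:ℤ) ≤ 1 * (p:ℝ)^(m:ℤ) := by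
          apply mul_le_mul_of_nonneg_right _ (zpow_nonneg hpR.le _)
          exact_mod_cast Padic.norm_int_le_one (p := p) (j:ℤ)
      _ = (p:ℝ)^(m:ℤ) := one_mul _
  have hinj : ∀ i ∈ Finset.range (p^(N+m)), ∀ j ∈ Finset.range (p^(N+m)),
      ctr i = ctr j → i = j := by
    intro i _ j _ hij
    rw [hctr] at hij
    simp only [mul_eq_mul_right_iff] at hij
    rcases hij with h | h
    · exact_mod_cast h
    · exact absurd h (zpow_ne_zero _ hppQ)
  refine ⟨-(N:ℤ), (Finset.range (p^(N+m))).image ctr, f, ?_⟩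
  intro x
  rw [Finset.sum_image hinj]
  by_cases hx : ‖x‖ ≤ (p:ℝ)^(m:ℤ)
  · -- x in the big ball: exactly one center is close
    have ht : ‖x * (p:ℚ_[p])^(m:ℤ)‖ ≤ 1 := by
      rw [norm_mul, Padic.norm_p_zpow]
      calc ‖x‖ * (p:ℝ)^(-(m:ℤ)) ≤ (p:ℝ)^(m:ℤ) * (p:ℝ)^(-(m:ℤ)) :=
            mul_le_mul_of_nonneg_right hx (zpow_nonneg hpR.le _)
        _ = (p:ℝ)^((m:ℤ) + (-(m:ℤ))) := (zpow_add₀ (ne_of_gt hpR) _ _).symm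
        _ = 1 := by rw [add_neg_cancel, zpow_zero]
    set z : ℤ_[p] := ⟨x * (p:ℚ_[p])^(m:ℤ), ht⟩ with hz
    set j0 : ℕ := z.appr (N+m) with hj0
    have hj0lt : j0 ∈ Finset.range (p^(N+m)) := by
      rw [Finset.mem_range]; exact z.appr_lt (N+m)
    have hclose : ‖x - ctr j0‖ ≤ (p:ℝ)^(-(N:ℤ)) := by
      have hspec := PadicInt.appr_spec (N+m) z
      rw [← PadicInt.norm_le_pow_iff_mem_span_pow] at hspec
      have hx2 : x - ctr j0 = ((z:ℚ_[p]) - ((j0:ℕ) : ℚ_[p])) * (p:ℚ_[p])^(-(m:ℤ)) := by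
        rw [hctr]
        have hh : (z:ℚ_[p]) = x * (p:ℚ_[p])^(m:ℤ) := rfl
        rw [hh, sub_mul, mul_assoc, ← zpow_add₀ hppQ, add_neg_cancel, zpow_zero, mul_one]
      rw [hx2, norm_mul, Padic.norm_p_zpow, neg_neg]
      have h1 : ‖(z:ℚ_[p]) - ((j0:ℕ) : ℚ_[p])‖ ≤ (p:ℝ)^(-((N:ℤ)+m)) := by
        have hcast : ((z - ((j0:ℕ) : ℤ_[p]) : ℤ_[p]) : ℚ_[p])
            = (z:ℚ_[p]) - ((j0:ℕ) : ℚ_[p]) := by push_cast; ring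
        have hexp : (-((N:ℤ)+m)) = -((N+m:ℕ):ℤ) := by push_cast; ring
        rw [hexp, ← hcast]
        exact_mod_cast hspec
      calc ‖(z:ℚ_[p]) - ((j0:ℕ) : ℚ_[p])‖ * (p:ℝ)^(m:ℤ)
          ≤ (p:ℝ)^(-((N:ℤ)+m)) * (p:ℝ)^(m:ℤ) :=
            mul_le_mul_of_nonneg_right h1 (zpow_nonneg hpR.le _)
        _ = (p:ℝ)^((-((N:ℤ)+m)) + m) := (zpow_add₀ (ne_of_gt hpR) _ _).symm
        _ = (p:ℝ)^(-(N:ℤ)) := by congr 1; ring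
    rw [Finset.sum_eq_single j0]
    · rw [bInd, if_pos hclose, mul_one]
      exact hN x (ctr j0) hclose
    · intro j hj hjne
      rw [Finset.mem_range] at hj
      have : ¬ (‖x - ctr j‖ ≤ (p:ℝ)^(-(N:ℤ))) := by
        intro hcj
        apply hjne
        have hdiff : ‖ctr j - ctr j0‖ ≤ (p:ℝ)^(-(N:ℤ)) := by
          have h1 : ctr j - ctr j0 = -(x - ctr j) + (x - ctr j0) := by ring
          rw [h1]
          exact le_trans (Padic.nonarchimedean _ _)
            (max_le (by rw [norm_neg]; exact hcj) hclose)
        have hcast : ctr j - ctr j0 = (((j:ℤ) - (j0:ℤ) : ℤ) : ℚ_[p]) * (p:ℚ_[p])^(-(m:ℤ)) := by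
          rw [hctr]; push_cast; ring
        rw [hcast, norm_mul, Padic.norm_p_zpow, neg_neg] at hdiff
        have hnormij : ‖(((j:ℤ) - (j0:ℤ) : ℤ) : ℚ_[p])‖ ≤ (p:ℝ)^(-((N+m:ℕ):ℤ)) := by
          have hpow : (0:ℝ) < (p:ℝ)^(m:ℤ) := zpow_pos hpR _
          rw [← mul_le_mul_iff_of_pos_right hpow]
          calc ‖(((j:ℤ) - (j0:ℤ) : ℤ) : ℚ_[p])‖ * (p:ℝ)^(m:ℤ) ≤ (p:ℝ)^(-(N:ℤ)) := hdiff
            _ = (p:ℝ)^(-((N+m:ℕ):ℤ)) * (p:ℝ)^(m:ℤ) := by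
                rw [← zpow_add₀ (ne_of_gt hpR)]; congr 1; push_cast; ring
        have hdvd : ((p:ℤ)^(N+m) : ℤ) ∣ ((j:ℤ) - (j0:ℤ)) :=
          (Padic.norm_int_le_pow_iff_dvd (p := p) ((j:ℤ) - (j0:ℤ)) (N+m)).mp hnormij
        have hz : (j:ℤ) - (j0:ℤ) = 0 := by
          apply Int.eq_zero_of_dvd_of_natAbs_lt_natAbs hdvd
          have hb : ((p:ℤ)^(N+m)).natAbs = p^(N+m) := by
            rw [← Nat.cast_pow, Int.natAbs_natCast]
          rw [hb]
          rw [Finset.mem_range] at hj0lt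
          omega
        omega
      rw [bInd, if_neg this, mul_zero]
    · intro h
      exact absurd hj0lt h
  · -- x outside the big ball
    rw [hm x (not_le.mp hx), Finset.sum_eq_zero]
    intro j _
    have : ¬ (‖x - ctr j‖ ≤ (p:ℝ)^(-(N:ℤ))) := by
      intro hcj
      apply hx
      have h1 : x = (x - ctr j) + ctr j := by ring
      rw [h1]
      apply le_trans (Padic.nonarchimedean _ _)
      apply max_le _ (hctr_norm j)
      exact le_trans hcj (zpow_le_zpow_right₀ (hp1 (p:=p)).le (by omega))
    rw [bInd, if_neg this, mul_zero]

lemma pP_cancel (n : ℤ) : ((((p:ℝ)^n : ℝ)) : ℂ) * ((((p:ℝ)^(-n) : ℝ)) : ℂ) = 1 := by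
  rw [← Complex.ofReal_mul, ← zpow_add₀ (ne_of_gt (hp0 (p:=p))), add_neg_cancel, zpow_zero,
    Complex.ofReal_one]

lemma locConst_sum_char (s : Finset ℚ_[p]) (a : ℚ_[p] → ℂ) (g : ℚ_[p] → ℚ_[p]) (m : ℤ) :
    IsLocallyConstant (fun x => ∑ c ∈ s, a c * (padicChar p (x * g c) * bInd p 0 m x)) := by
  classical
  induction s using Finset.induction_on with
  | empty => simp only [Finset.sum_empty]; exact IsLocallyConstant.const (0:ℂ)
  | insert _ _ hc ih =>
      simp only [Finset.sum_insert hc]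
      exact ((IsLocallyConstant.const _).mul
        ((char_mul_locConst _).mul (bInd_locConst 0 m))).add ih

section Fourier

variable {μ : MeasureTheory.Measure ℚ_[p]} [μ.IsAddHaarMeasure]

lemma fourier_step (hμ : μ {x : ℚ_[p] | ‖x‖ ≤ 1} = 1)
    {f : ℚ_[p] → ℂ} {n : ℤ} {s : Finset ℚ_[p]} {coef : ℚ_[p] → ℂ}
    (hf : ∀ x, f x = ∑ c ∈ s, coef c * bInd p c n x) (ξ : ℚ_[p]) :
    padicFourier p μ f ξ = ∑ c ∈ s, coef c * (padicChar p (ξ * c) * ((((p:ℝ)^n : ℝ)) : ℂ)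
      * (if ‖ξ‖ ≤ (p:ℝ)^(-n) then 1 else 0)) := by
  rw [padicFourier]
  have hform : ∀ x, padicChar p (ξ * x) * f x
      = ∑ c ∈ s, coef c * (padicChar p (ξ * x) * bInd p c n x) := by
    intro x
    rw [hf x, Finset.mul_sum]
    exact Finset.sum_congr rfl (fun c _ => by ring)
  simp only [hform]
  rw [MeasureTheory.integral_finset_sum _
    (fun c _ => (integrable_char_bInd ξ c n).const_mul (coef c))]
  refine Finset.sum_congr rfl (fun c _ => ?_)
  rw [MeasureTheory.integral_const_mul, integral_char_bInd hμ]

lemma fourierInv_eq (f : ℚ_[p] → ℂ) (x : ℚ_[p]) :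
    padicFourierInv p μ f x = padicFourier p μ f (-x) := by
  rw [padicFourierInv, padicFourier]
  simp only [neg_mul]

lemma inv_fourier_step (hμ : μ {x : ℚ_[p] | ‖x‖ ≤ 1} = 1)
    {f : ℚ_[p] → ℂ} (hf : IsStep p f) (x : ℚ_[p]) :
    padicFourierInv p μ (padicFourier p μ f) x = f x := by
  obtain ⟨n, s, coef, hrep⟩ := hf
  rw [fourierInv_eq, padicFourier]
  have hform : ∀ ξ, padicChar p ((-x) * ξ) * padicFourier p μ f ξ
      = ∑ c ∈ s, (coef c * ((((p:ℝ)^n : ℝ)) : ℂ))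
          * (padicChar p ((c - x) * ξ) * bInd p 0 (-n) ξ) := by
    intro ξ
    rw [fourier_step hμ hrep ξ, Finset.mul_sum]
    refine Finset.sum_congr rfl (fun c _ => ?_)
    have hb : (if ‖ξ‖ ≤ (p:ℝ)^(-n) then (1:ℂ) else 0) = bInd p 0 (-n) ξ := by
      rw [bInd, sub_zero]
    have hchar : padicChar p ((-x) * ξ) * padicChar p (ξ * c) = padicChar p ((c - x) * ξ) := by
      rw [← char_add]
      congr 1
      ring
    calc padicChar p ((-x) * ξ) * (coef c * (padicChar p (ξ * c) * ((((p:ℝ)^n : ℝ)) : ℂ)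
          * (if ‖ξ‖ ≤ (p:ℝ)^(-n) then (1:ℂ) else 0)))
        = (coef c * ((((p:ℝ)^n : ℝ)) : ℂ)) * ((padicChar p ((-x) * ξ) * padicChar p (ξ * c))
            * (if ‖ξ‖ ≤ (p:ℝ)^(-n) then (1:ℂ) else 0)) := by ring
      _ = (coef c * ((((p:ℝ)^n : ℝ)) : ℂ)) * (padicChar p ((c - x) * ξ) * bInd p 0 (-n) ξ) := by
          rw [hchar, hb]
  simp only [hform]
  rw [MeasureTheory.integral_finset_sum _
    (fun c _ => (integrable_char_bInd (c - x) 0 (-n)).const_mul _)]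
  rw [hrep x]
  refine Finset.sum_congr rfl (fun c _ => ?_)
  rw [MeasureTheory.integral_const_mul, integral_char_bInd hμ (c - x) 0 (-n)]
  rw [mul_zero, char_zero', one_mul, neg_neg, bInd]
  have hsymm : ‖c - x‖ = ‖x - c‖ := by rw [← norm_neg]; congr 1; ring
  rw [hsymm]
  by_cases h : ‖x - c‖ ≤ (p:ℝ)^n
  · rw [if_pos h, mul_one, mul_one, mul_assoc, pP_cancel, mul_one]
  · rw [if_neg h]
    simp

lemma fourier_inv_step (hμ : μ {x : ℚ_[p] | ‖x‖ ≤ 1} = 1)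
    {f : ℚ_[p] → ℂ} (hf : IsStep p f) (ξ : ℚ_[p]) :
    padicFourier p μ (padicFourierInv p μ f) ξ = f ξ := by
  rw [padicFourier]
  have hneg : ∫ x, padicChar p (ξ * x) * padicFourierInv p μ f x ∂μ
      = ∫ x, padicChar p (ξ * (-x)) * padicFourierInv p μ f (-x) ∂μ :=
    (MeasureTheory.integral_neg_eq_self
      (fun x => padicChar p (ξ * x) * padicFourierInv p μ f x) μ).symm
  rw [hneg]
  have h2 : ∀ x, padicChar p (ξ * (-x)) * padicFourierInv p μ f (-x)
      = padicChar p (-(ξ * x)) * padicFourier p μ f x := by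
    intro x
    rw [fourierInv_eq f (-x), neg_neg]
    congr 2
    ring
  simp only [h2]
  exact inv_fourier_step hμ hf ξ

end Fourier

lemma finset_norm_bound (s : Finset ℚ_[p]) : ∃ E : ℕ, ∀ c ∈ s, ‖c‖ ≤ (p:ℝ)^(E:ℤ) := by
  classical
  induction s using Finset.induction_on with
  | empty => exact ⟨0, by simp⟩
  | @insert c t hc ih =>
      obtain ⟨E, hE⟩ := ih
      obtain ⟨E', hE'⟩ := pow_unbounded_of_one_lt ‖c‖ (hp1 (p:=p))
      refine ⟨max E E', fun d hd => ?_⟩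
      rcases Finset.mem_insert.mp hd with rfl | hd
      · calc ‖d‖ ≤ (p:ℝ)^(E':ℤ) := by rw [zpow_natCast]; exact hE'.le
          _ ≤ (p:ℝ)^((max E E' : ℕ):ℤ) :=
              zpow_le_zpow_right₀ (hp1 (p:=p)).le (by exact_mod_cast le_max_right E E')
      · calc ‖d‖ ≤ (p:ℝ)^(E:ℤ) := hE d hd
          _ ≤ (p:ℝ)^((max E E' : ℕ):ℤ) :=
              zpow_le_zpow_right₀ (hp1 (p:=p)).le (by exact_mod_cast le_max_left E E')

end AuxPadic

open AuxPadic

/-- Let `φ` belong to the `p`-adic Lizorkin space (locally constant,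
compactly supported, zero integral) and `α ∈ ℂ`.  Then `g(ξ) = |ξ|_p^α 𝓕_pφ(ξ)` (with
`g(0) = 0`) is locally constant with compact support and vanishes near `0`; the fractional
derivative `D^αφ = 𝓕_p⁻¹ g` is again locally constant with compact support and zero
integral, and `D^{-α}(D^αφ) = φ`.  Here `μ` is the Haar measure with `μ(ℤ_p) = 1`. -/
theorem lizorkin_invariant_fractional (p : ℕ) [Fact p.Prime]
    (μ : MeasureTheory.Measure ℚ_[p]) [μ.IsAddHaarMeasure]
    (hμ : μ {x : ℚ_[p] | ‖x‖ ≤ 1} = 1)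
    (α : ℂ) (φ : ℚ_[p] → ℂ) (hlc : IsLocallyConstant φ) (hcs : HasCompactSupport φ)
    (hint : ∫ x, φ x ∂μ = 0) :
    IsLocallyConstant (rieszSymbolMul p μ α φ) ∧
    HasCompactSupport (rieszSymbolMul p μ α φ) ∧
    (∀ᶠ ξ in nhds (0 : ℚ_[p]), rieszSymbolMul p μ α φ ξ = 0) ∧
    IsLocallyConstant (padicFracDeriv p μ α φ) ∧
    HasCompactSupport (padicFracDeriv p μ α φ) ∧
    (∫ x, padicFracDeriv p μ α φ x ∂μ = 0) ∧
    padicFracDeriv p μ (-α) (padicFracDeriv p μ α φ) = φ := by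
  classical
  have hpR := hp0 (p:=p)
  have hp1' := hp1 (p:=p)
  obtain ⟨n, s, coef, hrep⟩ := isStep_of hlc hcs
  have hSφ : IsStep p φ := ⟨n, s, coef, hrep⟩
  -- Fourier transform at 0 is the integral
  have hF0 : padicFourier p μ φ 0 = 0 := by
    rw [padicFourier]
    simp only [zero_mul, char_zero', one_mul]
    exact hint
  obtain ⟨E, hE⟩ := finset_norm_bound s
  set m0 : ℤ := min (-n) (-(E:ℤ)) with hm0
  -- the Fourier transform vanishes on the ball of radius p^m0
  have hval : ∀ ξ : ℚ_[p], ‖ξ‖ ≤ (p:ℝ)^m0 →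
      padicFourier p μ φ ξ = ∑ c ∈ s, coef c * ((((p:ℝ)^n : ℝ)) : ℂ) := by
    intro ξ hξ
    rw [fourier_step hμ hrep ξ]
    refine Finset.sum_congr rfl (fun c hc => ?_)
    have h1 : padicChar p (ξ * c) = 1 := by
      apply char_eq_one
      rw [norm_mul]
      calc ‖ξ‖ * ‖c‖ ≤ (p:ℝ)^(-(E:ℤ)) * (p:ℝ)^(E:ℤ) := by
            apply mul_le_mul (le_trans hξ (zpow_le_zpow_right₀ hp1'.le (min_le_right _ _)))
              (hE c hc) (norm_nonneg _) (zpow_nonneg hpR.le _)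
        _ = (p:ℝ)^(-(E:ℤ) + (E:ℤ)) := (zpow_add₀ (ne_of_gt hpR) _ _).symm
        _ = 1 := by rw [neg_add_cancel, zpow_zero]
    have h2 : ‖ξ‖ ≤ (p:ℝ)^(-n) :=
      le_trans hξ (zpow_le_zpow_right₀ hp1'.le (min_le_left _ _))
    rw [h1, if_pos h2, one_mul, mul_one]
  have hFsmall : ∀ ξ : ℚ_[p], ‖ξ‖ ≤ (p:ℝ)^m0 → padicFourier p μ φ ξ = 0 := by
    intro ξ hξ
    rw [hval ξ hξ, ← hval 0 (by rw [norm_zero]; exact (zpow_pos hpR _).le), hF0]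
  -- the Fourier transform vanishes outside the ball of radius p^(-n)
  have hFbig : ∀ ξ : ℚ_[p], ¬ (‖ξ‖ ≤ (p:ℝ)^(-n)) → padicFourier p μ φ ξ = 0 := by
    intro ξ hξ
    rw [fourier_step hμ hrep ξ]
    apply Finset.sum_eq_zero
    intro c _
    rw [if_neg hξ, mul_zero, mul_zero]
  -- the Fourier transform is locally constant
  have hFlc : IsLocallyConstant (padicFourier p μ φ) := by
    have hform : padicFourier p μ φ = fun ξ => ∑ c ∈ s,
        (coef c * ((((p:ℝ)^n : ℝ)) : ℂ)) * (padicChar p (ξ * c) * bInd p 0 (-n) ξ) := by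
      funext ξ
      rw [fourier_step hμ hrep ξ]
      refine Finset.sum_congr rfl (fun c _ => ?_)
      rw [bInd, sub_zero]
      ring
    rw [hform]
    exact locConst_sum_char s _ id (-n)
  -- the symbol-multiplied transform vanishes near 0
  have hgsmall : ∀ ξ : ℚ_[p], ‖ξ‖ ≤ (p:ℝ)^m0 → rieszSymbolMul p μ α φ ξ = 0 := by
    intro ξ hξ
    rw [rieszSymbolMul]
    by_cases h : ξ = 0
    · rw [if_pos h]
    · rw [if_neg h, hFsmall ξ hξ, mul_zero]
  -- conclusion 1: locally constant
  have hglc : IsLocallyConstant (rieszSymbolMul p μ α φ) := by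
    rw [IsLocallyConstant.iff_exists_open]
    intro ξ0
    by_cases h0 : ‖ξ0‖ ≤ (p:ℝ)^m0
    · refine ⟨Metric.ball 0 ((p:ℝ)^(m0+1)), Metric.isOpen_ball, ?_, ?_⟩
      · rw [Metric.mem_ball, dist_zero_right]
        exact lt_of_le_of_lt h0 (zpow_lt_zpow_right₀ hp1' (by omega))
      · intro y hy
        rw [Metric.mem_ball, dist_zero_right] at hy
        rw [hgsmall y (norm_le_pow_of_lt_pow hy), hgsmall ξ0 h0]
    · have hξ0 : ξ0 ≠ 0 := by
        intro h
        exact h0 (by rw [h, norm_zero]; exact (zpow_pos hpR _).le)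
      obtain ⟨U, hUo, hUm, hUc⟩ := hFlc.exists_open ξ0
      obtain ⟨ε, hε, hball⟩ := Metric.isOpen_iff.mp hUo ξ0 hUm
      refine ⟨Metric.ball ξ0 (min ε ‖ξ0‖), Metric.isOpen_ball,
        Metric.mem_ball_self (lt_min hε (norm_pos_iff.mpr hξ0)), ?_⟩
      intro y hy
      rw [Metric.mem_ball, dist_eq_norm] at hy
      have h1 : ‖ξ0 - y‖ < ‖ξ0‖ := by
        rw [← norm_neg]
        calc ‖-(ξ0 - y)‖ = ‖y - ξ0‖ := by congr 1; ring
          _ < ‖ξ0‖ := lt_of_lt_of_le hy (min_le_right _ _)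
      have h2 : ‖y‖ = ‖ξ0‖ := norm_eq_of_sub_lt h1
      have hy0 : y ≠ 0 := by
        intro h
        rw [h, norm_zero] at h2
        exact hξ0 (norm_eq_zero.mp h2.symm)
      have hFy : padicFourier p μ φ y = padicFourier p μ φ ξ0 := by
        apply hUc y
        apply hball
        rw [Metric.mem_ball, dist_eq_norm]
        exact lt_of_lt_of_le hy (min_le_left _ _)
      rw [rieszSymbolMul, rieszSymbolMul, if_neg hy0, if_neg hξ0, h2, hFy]
  -- conclusion 2: compact support
  have hgbig : ∀ ξ : ℚ_[p], ¬ (‖ξ‖ ≤ (p:ℝ)^(-n)) → rieszSymbolMul p μ α φ ξ = 0 := by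
    intro ξ hξ
    have hξ0 : ξ ≠ 0 := by
      intro h
      exact hξ (by rw [h, norm_zero]; exact (zpow_pos hpR _).le)
    rw [rieszSymbolMul, if_neg hξ0, hFbig ξ hξ, mul_zero]
  have hgcs : HasCompactSupport (rieszSymbolMul p μ α φ) := by
    apply HasCompactSupport.intro (isCompact_pball (p := p) 0 (-n))
    intro ξ hξ
    apply hgbig
    intro hc
    exact hξ (by simpa [pball] using hc)
  -- conclusion 3: vanishing near 0
  have hgev : ∀ᶠ ξ in nhds (0 : ℚ_[p]), rieszSymbolMul p μ α φ ξ = 0 := by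
    have hmem : Metric.closedBall (0:ℚ_[p]) ((p:ℝ)^m0) ∈ nhds (0:ℚ_[p]) :=
      Metric.closedBall_mem_nhds 0 (zpow_pos hpR _)
    apply Filter.eventually_of_mem hmem
    intro ξ hξ
    rw [Metric.mem_closedBall, dist_zero_right] at hξ
    exact hgsmall ξ hξ
  -- step decomposition of the symbol-multiplied transform
  obtain ⟨n2, s2, coef2, hrep2⟩ := isStep_of hglc hgcs
  have hgstep : IsStep p (rieszSymbolMul p μ α φ) := ⟨n2, s2, coef2, hrep2⟩
  -- formula for the fractional derivative
  have hD : padicFracDeriv p μ α φ = fun x => ∑ c ∈ s2,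
      (coef2 c * ((((p:ℝ)^n2 : ℝ)) : ℂ)) * (padicChar p (x * (-c)) * bInd p 0 (-n2) x) := by
    funext x
    rw [padicFracDeriv, fourierInv_eq, fourier_step hμ hrep2 (-x)]
    refine Finset.sum_congr rfl (fun c _ => ?_)
    rw [bInd, sub_zero, norm_neg]
    have hmm : (-x) * c = x * (-c) := by ring
    rw [hmm]
    ring
  -- conclusion 4
  have hDlc : IsLocallyConstant (padicFracDeriv p μ α φ) := by
    rw [hD]
    exact locConst_sum_char s2 _ (fun c => -c) (-n2)
  -- conclusion 5
  have hDcs : HasCompactSupport (padicFracDeriv p μ α φ) := by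
    apply HasCompactSupport.intro (isCompact_pball (p := p) 0 (-n2))
    intro x hx
    have hxn : ¬ (‖x - 0‖ ≤ (p:ℝ)^(-n2)) := hx
    rw [hD]
    apply Finset.sum_eq_zero
    intro c _
    rw [bInd, if_neg (by rw [sub_zero]; rw [sub_zero] at hxn; exact hxn), mul_zero, mul_zero]
  -- conclusion 6
  have hDint : ∫ x, padicFracDeriv p μ α φ x ∂μ = 0 := by
    have h1 : ∫ x, padicFracDeriv p μ α φ x ∂μ
        = padicFourier p μ (padicFourierInv p μ (rieszSymbolMul p μ α φ)) 0 := by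
      rw [padicFourier]
      simp only [zero_mul, char_zero', one_mul]
      rfl
    rw [h1, fourier_inv_step hμ hgstep 0, rieszSymbolMul, if_pos rfl]
  -- conclusion 7
  have hsymb : rieszSymbolMul p μ (-α) (padicFracDeriv p μ α φ) = padicFourier p μ φ := by
    funext ξ
    rw [rieszSymbolMul]
    by_cases hξ : ξ = 0
    · rw [if_pos hξ, hξ, hF0]
    · rw [if_neg hξ]
      have hFD : padicFourier p μ (padicFracDeriv p μ α φ) ξ
          = rieszSymbolMul p μ α φ ξ := fourier_inv_step hμ hgstep ξ
      rw [hFD, rieszSymbolMul, if_neg hξ]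
      have hb : ((‖ξ‖ : ℝ) : ℂ) ≠ 0 := by
        exact_mod_cast norm_ne_zero_iff.mpr hξ
      rw [← mul_assoc, ← Complex.cpow_add _ _ hb, neg_add_cancel, Complex.cpow_zero, one_mul]
  have hfinal : padicFracDeriv p μ (-α) (padicFracDeriv p μ α φ) = φ := by
    rw [padicFracDeriv, hsymb]
    funext x
    exact inv_fourier_step hμ hSφ x
  exact ⟨hglc, hgcs, hgev, hDlc, hDcs, hDint, hfinal⟩
end
end
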